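/- arXiv:math/0110034 — 7 statements merged into one kernel-verified Lean document; each statement's English description precedes it below -/
import Mathlib

section
/- Let K ⊆ ℝⁿ be a convex body and p its center of gravity (centroid). Then for every x ∈ K, the point (1 + 1/(n+1))·p − (1/(n+1))·x belongs to K. -/
open MeasureTheory

/-- Key inequality: if `g = c - f` is a nonnegative affine function on a compact convex `K`,
then for any `x ∈ K` and `t ∈ (0,1)`,
`t^n * ((1-t) * g x * vol K + t * ∫_K g) ≤ ∫_K g`. -/
lemma centroid_key_ineq (n : ℕ) (K : Set (Fin n → ℝ)) (hK : IsCompact K)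
    (hconv : Convex ℝ K) (f : (Fin n → ℝ) →L[ℝ] ℝ) (c : ℝ)
    (hgK : ∀ y ∈ K, 0 ≤ c - f y)
    (x : Fin n → ℝ) (hx : x ∈ K) (t : ℝ) (ht0 : 0 < t) (ht1 : t < 1) :
    t ^ n * ((1 - t) * (c - f x) * (volume K).toReal + t * ∫ y in K, (c - f y)) ≤
      ∫ y in K, (c - f y) := by
  classical
  set g : (Fin n → ℝ) → ℝ := fun y => c - f y with hgdef
  have hgcont : Continuous g := continuous_const.sub f.continuous
  have hKm : MeasurableSet K := hK.measurableSet
  have hgint : IntegrableOn g K volume := hgcont.continuousOn.integrableOn_compact hK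
  set h : (Fin n → ℝ) → (Fin n → ℝ) := fun y => (x - t • x) + t • y with hhdef
  have hhy : ∀ y, h y = (1 - t) • x + t • y := by
    intro y
    simp only [hhdef, sub_smul, one_smul]
  have hhK : ∀ y ∈ K, h y ∈ K := by
    intro y hy
    rw [hhy]
    exact hconv hx hy (by linarith) ht0.le (by ring)
  have hinj : Function.Injective h := by
    intro a b hab
    simp only [hhdef, add_right_inj] at hab
    exact smul_right_injective (Fin n → ℝ) ht0.ne' hab
  set S : Set (Fin n → ℝ) := h '' K with hSdef
  have hScpt : IsCompact S := hK.image (by continuity)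
  have hSm : MeasurableSet S := hScpt.measurableSet
  have hSK : S ⊆ K := by
    rintro _ ⟨y, hy, rfl⟩
    exact hhK y hy
  -- change of variables
  have hind : (fun y => S.indicator g ((x - t • x) + t • y)) =
      K.indicator (fun y => g (h y)) := by
    funext y
    by_cases hy : y ∈ K
    · rw [Set.indicator_of_mem hy, Set.indicator_of_mem (Set.mem_image_of_mem h hy)]
    · rw [Set.indicator_of_notMem hy, Set.indicator_of_notMem]
      rintro ⟨z, hz, hzy⟩
      exact hy (hinj hzy ▸ hz)
  have hfin : Module.finrank ℝ (Fin n → ℝ) = n := Module.finrank_fin_fun ℝ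
  have step1 : ∫ z in S, g z = t ^ n * ∫ y in K, g (h y) := by
    have e1 : ∫ z in S, g z = ∫ z, S.indicator g z := (integral_indicator hSm).symm
    have e2 : ∫ z, S.indicator g z = ∫ z, S.indicator g ((x - t • x) + z) :=
      (integral_add_left_eq_self (S.indicator g) (x - t • x)).symm
    have e3 : ∫ y, S.indicator g ((x - t • x) + t • y) =
        (t ^ Module.finrank ℝ (Fin n → ℝ))⁻¹ • ∫ z, S.indicator g ((x - t • x) + z) :=
      Measure.integral_comp_smul_of_nonneg volume
        (fun z => S.indicator g ((x - t • x) + z)) t (hR := ht0.le)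
    have e4 : ∫ y, S.indicator g ((x - t • x) + t • y) = ∫ y in K, g (h y) := by
      rw [hind, integral_indicator hKm]
    have htn : (0:ℝ) < t ^ n := pow_pos ht0 n
    rw [hfin] at e3
    have e5 : ∫ z, S.indicator g ((x - t • x) + z) = t ^ n * ∫ y in K, g (h y) := by
      rw [← e4, e3, smul_eq_mul]
      field_simp
    rw [e1, e2, e5]
  have step2 : ∀ y, g (h y) = (1 - t) * g x + t * g y := by
    intro y
    simp only [hgdef, hhy y, f.map_add, f.map_smul, smul_eq_mul]
    ring
  have step3 : ∫ y in K, g (h y) =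
      (1 - t) * g x * (volume K).toReal + t * ∫ y in K, g y := by
    simp only [step2]
    rw [integral_add (integrableOn_const (C := (1 - t) * g x) hK.measure_lt_top.ne)
      (hgint.const_mul t)]
    rw [setIntegral_const, integral_const_mul]
    simp [smul_eq_mul, measureReal_def]
    ring
  have step4 : ∫ z in S, g z ≤ ∫ y in K, g y := by
    apply setIntegral_mono_set hgint
    · exact (ae_restrict_iff' hKm).2 (ae_of_all _ hgK)
    · exact HasSubset.Subset.eventuallyLE hSK
  calc t ^ n * ((1 - t) * (c - f x) * (volume K).toReal + t * ∫ y in K, (c - f y))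
      = t ^ n * ∫ y in K, g (h y) := by rw [step3]
    _ = ∫ z in S, g z := step1.symm
    _ ≤ ∫ y in K, (c - f y) := step4

set_option maxHeartbeats 1000000 in
/-- Centroid property: if `K ⊆ ℝⁿ` is a convex body with centroid `p`, then for every
`x ∈ K` the point `(1 + 1/(n+1))·p − (1/(n+1))·x` lies in `K`. -/
theorem stmt_2 (n : ℕ) (K : Set (Fin n → ℝ))
    (hK : IsCompact K) (hconv : Convex ℝ K) (hint : (interior K).Nonempty)
    (p : Fin n → ℝ) (hp : p = ⨍ x in K, x) :
    ∀ x ∈ K, (1 + 1 / (n + 1 : ℝ)) • p - (1 / (n + 1 : ℝ)) • x ∈ K := by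
  classical
  intro x hx
  by_contra hq
  obtain ⟨f, c, hfc, hcq⟩ := geometric_hahn_banach_closed_point hconv hK.isClosed hq
  have hKm : MeasurableSet K := hK.measurableSet
  have hVpos : 0 < (volume K).toReal := by
    have h1 : 0 < volume (interior K) := isOpen_interior.measure_pos volume hint
    exact ENNReal.toReal_pos (lt_of_lt_of_le h1 (measure_mono interior_subset)).ne'
      hK.measure_lt_top.ne
  set V : ℝ := (volume K).toReal with hV
  have hgK : ∀ y ∈ K, 0 ≤ c - f y := fun y hy => by linarith [hfc y hy]
  have hgint : IntegrableOn (fun y => c - f y) K volume :=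
    (continuous_const.sub f.continuous).continuousOn.integrableOn_compact hK
  set I : ℝ := ∫ y in K, (c - f y) with hI
  have hInn : 0 ≤ I := setIntegral_nonneg hKm hgK
  -- compute f p
  have hid_int : IntegrableOn (fun y : Fin n → ℝ => y) K volume :=
    continuous_id.continuousOn.integrableOn_compact hK
  have hfint : IntegrableOn (fun y => f y) K volume :=
    f.continuous.continuousOn.integrableOn_compact hK
  have hfp : V * f p = c * V - I := by
    have h1 : f p = V⁻¹ * ∫ y in K, f y := by
      rw [hp, setAverage_eq, _root_.map_smul]
      rw [← f.integral_comp_comm hid_int]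
      simp [smul_eq_mul, hV, measureReal_def]
    have h2 : I = c * V - ∫ y in K, f y := by
      rw [hI, integral_sub (integrableOn_const (C := c) hK.measure_lt_top.ne) hfint]
      rw [setIntegral_const]
      simp [smul_eq_mul, hV, measureReal_def]
      ring
    rw [h1]
    field_simp
    linarith
  -- from separation: V * (c - f x) > (n+2) * I
  have hn1 : (0:ℝ) < (n:ℝ) + 1 := by positivity
  have hfq : f ((1 + 1 / (n + 1 : ℝ)) • p - (1 / (n + 1 : ℝ)) • x)
      = (1 + 1 / (n + 1 : ℝ)) * f p - (1 / (n + 1 : ℝ)) * f x := by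
    simp only [map_sub, _root_.map_smul, smul_eq_mul]
  have hsep : V * (c - f x) > ((n:ℝ) + 2) * I := by
    rw [hfq] at hcq
    have h3 : ((n:ℝ)+1) * c < ((n:ℝ)+2) * f p - f x := by
      have h := mul_lt_mul_of_pos_left hcq hn1
      have h5 : ((n:ℝ)+1) ≠ 0 := hn1.ne'
      have hinv : ((n:ℝ)+1) * (1/((n:ℝ)+1)) = 1 := mul_one_div_cancel h5
      have e : ((n:ℝ)+1) * ((1 + 1/((n:ℝ)+1)) * f p - (1/((n:ℝ)+1)) * f x)
          = ((n:ℝ)+2) * f p - f x := by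
        linear_combination (f p - f x) * hinv
      push_cast at h
      rw [e] at h
      exact h
    have h4 : ((n:ℝ)+1) * c * V < (((n:ℝ)+2) * f p - f x) * V :=
      mul_lt_mul_of_pos_right h3 hVpos
    nlinarith [h4, hfp]
  -- choose t close to 1
  set ε : ℝ := 1 / (2 * ((n:ℝ) + 1) * ((n:ℝ) + 2)) with hε
  have hεpos : 0 < ε := by positivity
  have hεlt : ε < 1 := by
    rw [hε]
    rw [div_lt_one (by positivity)]
    nlinarith [Nat.cast_nonneg (α := ℝ) n]
  set t : ℝ := 1 - ε with ht
  have ht0 : 0 < t := by simp [ht]; linarith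
  have ht1 : t < 1 := by simp [ht]; linarith
  -- Bernoulli : t^n ≥ 1 - n ε
  have hbern : 1 - (n:ℝ) * ε ≤ t ^ n := by
    have := one_add_mul_le_pow (a := -ε) (by linarith) n
    simpa [ht, sub_eq_add_neg, mul_comm] using this
  -- geometric sum : 1 - t^(n+1) = (1-t) * ∑_{i<n+1} t^i ≤ (1-t) * (n+1)
  have hgeom : 1 - t ^ (n + 1) ≤ (1 - t) * ((n:ℝ) + 1) := by
    have hsum : (∑ i ∈ Finset.range (n + 1), t ^ i) * (t - 1) = t ^ (n + 1) - 1 :=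
      geom_sum_mul t (n + 1)
    have hbd : (∑ i ∈ Finset.range (n + 1), t ^ i) ≤ ((n:ℝ) + 1) := by
      calc (∑ i ∈ Finset.range (n + 1), t ^ i) ≤ ∑ i ∈ Finset.range (n + 1), (1:ℝ) :=
            Finset.sum_le_sum fun i _ => pow_le_one₀ ht0.le ht1.le
        _ = ((n:ℝ) + 1) := by simp
    nlinarith [hsum, hbd]
  -- key comparison : (n+2) * t^n * (1-t) > 1 - t^(n+1)
  have hcomp : ((n:ℝ) + 2) * t ^ n * (1 - t) > 1 - t ^ (n + 1) := by
    have h1t : 1 - t = ε := by simp [ht]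
    have h6 : ((n:ℝ) + 2) * t ^ n ≥ ((n:ℝ) + 2) * (1 - (n:ℝ) * ε) := by
      nlinarith [hbern]
    have h7 : ((n:ℝ) + 2) * (1 - (n:ℝ) * ε) > (n:ℝ) + 1 := by
      have : ((n:ℝ) + 2) * (n:ℝ) * ε < 1 := by
        rw [hε]
        rw [div_eq_inv_mul, ← mul_assoc]
        have h8 : ((n:ℝ)+2) * (n:ℝ) * (2 * ((n:ℝ) + 1) * ((n:ℝ) + 2))⁻¹ < 1 := by
          rw [mul_inv_lt_iff₀ (by positivity)]
          nlinarith [Nat.cast_nonneg (α := ℝ) n]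
        nlinarith [h8]
      nlinarith [this]
    have h9 : ((n:ℝ) + 2) * t ^ n > (n:ℝ) + 1 := by linarith
    calc ((n:ℝ) + 2) * t ^ n * (1 - t) > ((n:ℝ) + 1) * (1 - t) := by
          apply mul_lt_mul_of_pos_right h9 (by linarith)
      _ ≥ 1 - t ^ (n + 1) := by nlinarith [hgeom]
  -- the key inequality
  have hkey := centroid_key_ineq n K hK hconv f c hgK x hx t ht0 ht1
  rw [← hI, ← hV] at hkey
  -- derive contradiction
  have htn : (0:ℝ) < t ^ n := pow_pos ht0 n
  have hexp : t ^ (n + 1) = t ^ n * t := pow_succ t n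
  have hA : t ^ n * (1 - t) * (V * (c - f x)) > t ^ n * (1 - t) * (((n:ℝ) + 2) * I) :=
    mul_lt_mul_of_pos_left hsep (mul_pos htn (by linarith))
  have hB : (((n:ℝ) + 2) * t ^ n * (1 - t)) * I ≥ (1 - t ^ (n + 1)) * I :=
    mul_le_mul_of_nonneg_right hcomp.le hInn
  rw [hexp] at hB
  nlinarith [hkey, hA, hB]
end

section
/- Let S ∈ ℤ^{m×n} with all n×n subdeterminants nonzero in absolute value at least δ_n(S) > 0 and at most Δ_n(S), and let K_u = {x ∈ ℝⁿ : Sx ≤ u} be a bounded polytope. Then for any two rows s^{(i)}, s^{(j)} of S, width_{s^{(i)}}(K_u) ≤ 2(Δ_n(S)/δ_n(S))·width_{s^{(j)}}(K_u). -/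
open Matrix

lemma farkas_aux {n : ℕ} : ∀ (N : ℕ) (a : Fin N → (Fin n → ℝ)) (b : Fin n → ℝ),
    (∃ q : Fin N → ℝ, (∀ k, 0 ≤ q k) ∧ b = ∑ k, q k • a k) ∨
    (∃ d : Fin n → ℝ, (∀ k, a k ⬝ᵥ d ≤ 0) ∧ 0 < b ⬝ᵥ d) := by
  intro N
  induction N with
  | zero =>
    intro a b
    by_cases hb : b = 0
    · exact Or.inl ⟨0, fun k => le_refl _, by simp [hb]⟩
    · refine Or.inr ⟨b, fun k => k.elim0, ?_⟩
      exact (Finset.sum_nonneg fun l _ => mul_self_nonneg _).lt_of_ne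
        (Ne.symm ((dotProduct_self_eq_zero (v := b)).not.mpr hb))
  | succ N ih =>
    intro a b
    set aN := a (Fin.last N) with haN
    rcases ih (fun k => a k.castSucc) b with ⟨q, hq, hrep⟩ | ⟨d, hd, hbd⟩
    · refine Or.inl ⟨Fin.lastCases 0 q, ?_, ?_⟩
      · intro k
        induction k using Fin.lastCases with
        | last => simp
        | cast k => simpa using hq k
      · rw [Fin.sum_univ_castSucc]
        simp [hrep]
    · by_cases hNd : aN ⬝ᵥ d ≤ 0
      · refine Or.inr ⟨d, fun k => ?_, hbd⟩
        induction k using Fin.lastCases with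
        | last => exact hNd
        | cast k => exact hd k
      · push_neg at hNd
        have hNd0 : aN ⬝ᵥ d ≠ 0 := ne_of_gt hNd
        set lam : (Fin n → ℝ) → ℝ := fun v => (v ⬝ᵥ d) / (aN ⬝ᵥ d) with hlam
        rcases ih (fun k => a k.castSucc - lam (a k.castSucc) • aN) (b - lam b • aN) with
          ⟨q, hq, hrep⟩ | ⟨d', hd', hbd'⟩
        · set c : ℝ := lam b - ∑ k, q k * lam (a k.castSucc) with hc
          have hsum : ∀ k, 0 ≤ q k * (- (a k.castSucc ⬝ᵥ d)) :=
            fun k => mul_nonneg (hq k) (by linarith [hd k])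
          have hcpos : 0 ≤ c := by
            rw [hc, hlam]
            simp only []
            have hterm : ∀ k ∈ Finset.univ, q k * (a (Fin.castSucc k) ⬝ᵥ d / (aN ⬝ᵥ d)) ≤ 0 :=
              fun k _ => mul_nonpos_of_nonneg_of_nonpos (hq k)
                (div_nonpos_of_nonpos_of_nonneg (hd k) hNd.le)
            have hsum2 := Finset.sum_nonpos hterm
            have hpos : 0 < b ⬝ᵥ d / (aN ⬝ᵥ d) := div_pos hbd hNd
            linarith
          refine Or.inl ⟨Fin.lastCases c q, ?_, ?_⟩
          · intro k
            induction k using Fin.lastCases with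
            | last => simpa using hcpos
            | cast k => simpa using hq k
          · funext l
            have hl := congrFun hrep l
            simp only [Pi.sub_apply, Pi.smul_apply, smul_eq_mul, Finset.sum_apply] at hl ⊢
            rw [Fin.sum_univ_castSucc]
            simp only [Fin.lastCases_castSucc, Fin.lastCases_last]
            have : ∑ k : Fin N, q k * (a k.castSucc l - lam (a k.castSucc) * aN l)
                = ∑ k : Fin N, q k * a k.castSucc l
                  - (∑ k : Fin N, q k * lam (a k.castSucc)) * aN l := by
              rw [Finset.sum_mul, ← Finset.sum_sub_distrib]
              exact Finset.sum_congr rfl fun k _ => by ring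
            rw [this] at hl
            rw [hc]
            linarith [hl]
          -- done left
        · set mu : ℝ := (aN ⬝ᵥ d') / (aN ⬝ᵥ d) with hmu
          refine Or.inr ⟨d' - mu • d, ?_, ?_⟩
          · intro k
            induction k using Fin.lastCases with
            | last =>
              rw [← haN, dotProduct_sub, dotProduct_smul, hmu, smul_eq_mul]
              rw [div_mul_cancel₀ _ hNd0]
              simp
            | cast k =>
              have h1 := hd' k
              rw [sub_dotProduct, smul_dotProduct, smul_eq_mul, hlam] at h1
              rw [dotProduct_sub, dotProduct_smul, smul_eq_mul, hmu]
              have : a k.castSucc ⬝ᵥ d / (aN ⬝ᵥ d) * (aN ⬝ᵥ d')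
                  = aN ⬝ᵥ d' / (aN ⬝ᵥ d) * (a k.castSucc ⬝ᵥ d) := by ring
              linarith [h1, this]
          · have h1 := hbd'
            rw [sub_dotProduct, smul_dotProduct, smul_eq_mul, hlam] at h1
            rw [dotProduct_sub, dotProduct_smul, smul_eq_mul, hmu]
            have : b ⬝ᵥ d / (aN ⬝ᵥ d) * (aN ⬝ᵥ d')
                = aN ⬝ᵥ d' / (aN ⬝ᵥ d) * (b ⬝ᵥ d) := by ring
            linarith [h1, this]

lemma cone_caratheodory {m n : ℕ} (v : Fin m → (Fin n → ℝ)) :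
    ∀ (N : ℕ) (T : Finset (Fin m)), T.card ≤ N → ∀ (q : Fin m → ℝ) (b : Fin n → ℝ),
      (∀ k, 0 ≤ q k) → b = ∑ k ∈ T, q k • v k →
      ∃ (R : Finset (Fin m)) (p : Fin m → ℝ), R ⊆ T ∧ (∀ k, 0 ≤ p k) ∧
        b = ∑ k ∈ R, p k • v k ∧ LinearIndependent ℝ (fun k : R => v k) := by
  intro N
  induction N with
  | zero =>
    intro T hT q b hq hrep
    have : T = ∅ := Finset.card_eq_zero.mp (Nat.le_zero.mp hT)
    subst this
    refine ⟨∅, q, Finset.Subset.refl _, hq, hrep, ?_⟩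
    haveI : IsEmpty {x // x ∈ (∅ : Finset (Fin m))} := Finset.isEmpty_coe_sort.mpr rfl
    exact linearIndependent_empty_type
  | succ N ih =>
    intro T hT q b hq hrep
    set R : Finset (Fin m) := T.filter (fun k => q k ≠ 0) with hR
    have hRT : R ⊆ T := Finset.filter_subset _ _
    have hrepR : b = ∑ k ∈ R, q k • v k := by
      rw [hrep, hR]
      exact (Finset.sum_filter_of_ne (fun k _ h => by
        intro h0; apply h; rw [h0, zero_smul])).symm
    by_cases hind : LinearIndependent ℝ (fun k : R => v k)
    · exact ⟨R, q, hRT, hq, hrepR, hind⟩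
    · rw [Fintype.not_linearIndependent_iff] at hind
      obtain ⟨g, hg0, i0, hgi0⟩ := hind
      -- wlog there is an index with positive coefficient
      obtain ⟨g, hg0, i0, hgi0⟩ :
          ∃ g : {x // x ∈ R} → ℝ, (∑ i, g i • v (i : Fin m) = 0) ∧ ∃ i, 0 < g i := by
        rcases hgi0.lt_or_gt with hneg | hpos
        · refine ⟨-g, ?_, i0, by simpa using hneg⟩
          simp only [Pi.neg_apply, neg_smul]
          rw [Finset.sum_neg_distrib, hg0, neg_zero]
        · exact ⟨g, hg0, i0, hpos⟩
      set c : Fin m → ℝ := fun k => if h : k ∈ R then g ⟨k, h⟩ else 0 with hc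
      have hcrel : ∑ k ∈ R, c k • v k = 0 := by
        rw [← Finset.sum_attach R (fun k => c k • v k), ← hg0, Finset.univ_eq_attach]
        refine Finset.sum_congr rfl fun i _ => ?_
        congr 1
        simp [hc, i.2]
      have hci0 : 0 < c (i0 : Fin m) := by
        rw [hc]; simpa [i0.2] using hgi0
      set P : Finset (Fin m) := R.filter (fun k => 0 < c k) with hP
      have hPne : P.Nonempty := ⟨i0, by rw [hP, Finset.mem_filter]; exact ⟨i0.2, hci0⟩⟩
      obtain ⟨k0, hk0P, hk0min⟩ := P.exists_min_image (fun k => q k / c k) hPne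
      have hk0R : k0 ∈ R := (Finset.mem_filter.mp hk0P).1
      have hck0 : 0 < c k0 := (Finset.mem_filter.mp hk0P).2
      set t : ℝ := q k0 / c k0 with ht
      have ht0 : 0 ≤ t := div_nonneg (hq k0) hck0.le
      set q' : Fin m → ℝ := fun k => q k - t * c k with hq'
      have hq'0 : ∀ k, 0 ≤ q' k := by
        intro k
        rw [hq']
        simp only []
        by_cases hkR : k ∈ R
        · rcases le_or_gt (c k) 0 with hck | hck
          · nlinarith [hq k]
          · have hkP : k ∈ P := Finset.mem_filter.mpr ⟨hkR, hck⟩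
            have := hk0min k hkP
            rw [le_div_iff₀ hck] at this
            linarith
        · have : c k = 0 := by rw [hc]; simp [hkR]
          rw [this]; simpa using hq k
      have hrep' : b = ∑ k ∈ R, q' k • v k := by
        have hsplit : ∑ k ∈ R, q' k • v k
            = (∑ k ∈ R, q k • v k) - t • (∑ k ∈ R, c k • v k) := by
          rw [Finset.smul_sum, ← Finset.sum_sub_distrib]
          refine Finset.sum_congr rfl fun k _ => ?_
          rw [hq']
          rw [sub_smul, smul_smul]
        rw [hsplit, hcrel, smul_zero, sub_zero, hrepR]
      have hq'k0 : q' k0 = 0 := by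
        rw [hq', ht]
        field_simp
        simp
      have hrep'' : b = ∑ k ∈ R.erase k0, q' k • v k := by
        rw [hrep']
        exact (Finset.sum_erase _ (by rw [hq'k0, zero_smul])).symm
      have hcard : (R.erase k0).card ≤ N := by
        have h1 : (R.erase k0).card = R.card - 1 := Finset.card_erase_of_mem hk0R
        have h2 : R.card ≤ T.card := Finset.card_le_card hRT
        omega
      obtain ⟨R', p, hsub, hp0, hprep, hpind⟩ := ih (R.erase k0) hcard q' b hq'0 hrep''
      exact ⟨R', p, fun x hx => hRT (Finset.mem_of_mem_erase (hsub hx)), hp0, hprep, hpind⟩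

lemma dot_continuous {n : ℕ} (v : Fin n → ℝ) : Continuous (fun x : Fin n → ℝ => v ⬝ᵥ x) := by
  have : (fun x : Fin n → ℝ => v ⬝ᵥ x) = fun x => ∑ l, v l * x l := rfl
  rw [this]
  exact continuous_finset_sum _ fun l _ => continuous_const.mul (continuous_apply l)

lemma exists_dual {m n : ℕ} (s : Fin m → (Fin n → ℝ)) (u : Fin m → ℝ)
    (K : Set (Fin n → ℝ)) (hK : K = {x | ∀ k, s k ⬝ᵥ x ≤ u k})
    (hcomp : IsCompact K) (hne : K.Nonempty) (j : Fin m) :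
    ∃ (z : Fin n → ℝ) (R : Finset (Fin m)) (p : Fin m → ℝ), z ∈ K ∧ (∀ k, 0 ≤ p k) ∧
      (∀ k ∈ R, s k ⬝ᵥ z = u k) ∧ (-(s j)) = ∑ k ∈ R, p k • s k ∧
      LinearIndependent ℝ (fun k : R => s (k : Fin m)) := by
  obtain ⟨z, hzK, hzmin⟩ := hcomp.exists_isMinOn hne (dot_continuous (s j)).continuousOn
  have hzmem : ∀ k, s k ⬝ᵥ z ≤ u k := by rw [hK] at hzK; exact hzK
  set a : Fin m → (Fin n → ℝ) := fun k => if s k ⬝ᵥ z = u k then s k else 0 with ha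
  rcases farkas_aux m a (-(s j)) with ⟨q, hq, hrep⟩ | ⟨d, hd, hbd⟩
  · set q' : Fin m → ℝ := fun k => if s k ⬝ᵥ z = u k then q k else 0 with hq'
    have hq'0 : ∀ k, 0 ≤ q' k := by
      intro k; rw [hq']; by_cases h : s k ⬝ᵥ z = u k <;> simp [h, hq k]
    have hrep' : -(s j) = ∑ k, q' k • s k := by
      rw [hrep]
      refine Finset.sum_congr rfl fun k _ => ?_
      by_cases h : s k ⬝ᵥ z = u k <;> simp [ha, hq', h]
    set T : Finset (Fin m) := Finset.univ.filter (fun k => s k ⬝ᵥ z = u k) with hT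
    have hrepT : -(s j) = ∑ k ∈ T, q' k • s k := by
      rw [hrep']
      symm
      apply Finset.sum_subset (Finset.subset_univ T)
      intro k _ hkT
      have hnt : ¬ (s k ⬝ᵥ z = u k) := by
        intro h; exact hkT (Finset.mem_filter.mpr ⟨Finset.mem_univ k, h⟩)
      simp [hq', hnt]
    have hcard : T.card ≤ m := le_trans (Finset.card_le_univ T) (by simp)
    obtain ⟨R, p, hRT, hp, hrepR, hind⟩ :=
      cone_caratheodory s m T hcard q' (-(s j)) hq'0 hrepT
    refine ⟨z, R, p, hzK, hp, fun k hk => ?_, hrepR, hind⟩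
    have := hRT hk
    rw [hT, Finset.mem_filter] at this
    exact this.2
  · exfalso
    set eps : Fin m → ℝ := fun k =>
      if 0 < s k ⬝ᵥ d then (u k - s k ⬝ᵥ z) / (s k ⬝ᵥ d) else 1 with heps
    set ε : ℝ := Finset.univ.inf' ⟨j, Finset.mem_univ j⟩ eps with hε
    have hepspos : ∀ k, 0 < eps k := by
      intro k
      rw [heps]
      by_cases h : 0 < s k ⬝ᵥ d
      · have hnt : s k ⬝ᵥ z ≠ u k := by
          intro hteq
          have hak : a k = s k := by rw [ha]; simp [hteq]
          have := hd k
          rw [hak] at this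
          linarith
        simp only [if_pos h]
        refine div_pos ?_ h
        have := hzmem k
        rcases lt_or_eq_of_le this with hlt | heq
        · linarith
        · exact absurd heq hnt
      · simp [h]
    have hεpos : 0 < ε := by
      rw [hε]
      exact (Finset.lt_inf'_iff ..).mpr fun k _ => hepspos k
    have hεle : ∀ k, ε ≤ eps k := fun k => Finset.inf'_le _ (Finset.mem_univ k)
    have hmem : z + ε • d ∈ K := by
      rw [hK]
      intro k
      have hdot : s k ⬝ᵥ (z + ε • d) = s k ⬝ᵥ z + ε * (s k ⬝ᵥ d) := by
        rw [dotProduct_add, dotProduct_smul, smul_eq_mul]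
      rw [hdot]
      by_cases h : 0 < s k ⬝ᵥ d
      · have h1 : ε ≤ (u k - s k ⬝ᵥ z) / (s k ⬝ᵥ d) := by
          have := hεle k; rw [heps] at this; simpa [if_pos h] using this
        have h2 := (le_div_iff₀ h).mp h1
        linarith
      · push_neg at h
        have : ε * (s k ⬝ᵥ d) ≤ 0 := mul_nonpos_of_nonneg_of_nonpos hεpos.le h
        linarith [hzmem k]
    have hjd : s j ⬝ᵥ d < 0 := by
      rw [neg_dotProduct] at hbd
      linarith
    have hlt : s j ⬝ᵥ (z + ε • d) < s j ⬝ᵥ z := by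
      rw [dotProduct_add, dotProduct_smul, smul_eq_mul]
      nlinarith
    exact absurd ((isMinOn_iff.mp hzmin) _ hmem) (not_le.mpr hlt)

lemma rows_indep {m n : ℕ} (S : Matrix (Fin m) (Fin n) ℤ) (δ : ℝ) (hδ : 0 < δ)
    (hsub : ∀ f : Fin n → Fin m, Function.Injective f → δ ≤ |((S.submatrix f id).det : ℝ)|)
    (hmn : n ≤ m) (R : Finset (Fin m)) (hcard : R.card ≤ n) :
    LinearIndependent ℝ (fun k : R => (fun l => (S (k : Fin m) l : ℝ))) := by
  obtain ⟨T, hRT, -, hTcard⟩ := Finset.exists_subsuperset_card_eq (Finset.subset_univ R)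
    hcard (by simpa using hmn)
  set iso := T.orderIsoOfFin hTcard with hiso
  set finj : Fin n → Fin m := fun a => (iso a : Fin m) with hfinj
  have hfinj_inj : Function.Injective finj := fun a b hab => by
    apply iso.injective; exact Subtype.ext hab
  set A : Matrix (Fin n) (Fin n) ℝ := (S.submatrix finj id).map (Int.castRingHom ℝ) with hA
  have hdet : A.det = ((S.submatrix finj id).det : ℝ) :=
    ((Int.castRingHom ℝ).map_det _).symm
  have hdetne : A.det ≠ 0 := by
    rw [hdet]
    intro h
    have := hsub finj hfinj_inj
    rw [h] at this
    simp at this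
    linarith
  have hrows : LinearIndependent ℝ (fun a : Fin n => A a) :=
    Matrix.linearIndependent_rows_iff_isUnit.mpr
      ((Matrix.isUnit_iff_isUnit_det _).mpr (isUnit_iff_ne_zero.mpr hdetne))
  set e : {x // x ∈ R} → Fin n := fun k => iso.symm ⟨k.1, hRT k.2⟩ with he
  have he_inj : Function.Injective e := by
    intro a b hab
    rw [he] at hab
    have h2 : (⟨a.1, hRT a.2⟩ : {x // x ∈ T}) = ⟨b.1, hRT b.2⟩ := iso.symm.injective hab
    have h3 : (a : Fin m) = (b : Fin m) := by simpa using h2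
    exact Subtype.ext h3
  have hcomp := hrows.comp e he_inj
  convert hcomp using 1
  funext k
  have : finj (e k) = (k : Fin m) := by
    show ((iso (iso.symm ⟨k.1, hRT k.2⟩) : {x // x ∈ T}) : Fin m) = k.1
    rw [OrderIso.apply_symm_apply]
  funext l
  rw [hA]
  simp [Matrix.map_apply, Matrix.submatrix_apply, this]

lemma unbounded_of_lt {m n : ℕ} (hmn : m < n) (s : Fin m → Fin n → ℝ) (u : Fin m → ℝ)
    (K : Set (Fin n → ℝ)) (hK : K = {x | ∀ k, s k ⬝ᵥ x ≤ u k}) (hne : K.Nonempty) :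
    ¬ Bornology.IsBounded K := by
  obtain ⟨x0, hx0⟩ := hne
  set Sr : Matrix (Fin m) (Fin n) ℝ := Matrix.of s with hSr
  have hker : LinearMap.ker Sr.mulVecLin ≠ ⊥ := by
    intro h
    have hinj : Function.Injective Sr.mulVecLin := LinearMap.ker_eq_bot.mp h
    have := LinearMap.finrank_le_finrank_of_injective hinj
    rw [Module.finrank_pi ℝ, Module.finrank_pi ℝ] at this
    simp at this
    omega
  obtain ⟨v, hvker, hvne⟩ := Submodule.exists_mem_ne_zero_of_ne_bot hker
  have hvdot : ∀ k, s k ⬝ᵥ v = 0 := by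
    intro k
    have := LinearMap.mem_ker.mp hvker
    have h2 := congrFun this k
    simpa [Matrix.mulVecLin_apply, Matrix.mulVec, hSr] using h2
  intro hbdd
  obtain ⟨C, hC⟩ := Bornology.IsBounded.exists_norm_le hbdd
  have hvnorm : 0 < ‖v‖ := norm_pos_iff.mpr hvne
  set t : ℝ := (C + ‖x0‖ + 1) / ‖v‖ with ht
  have hmemt : x0 + t • v ∈ K := by
    rw [hK]
    intro k
    rw [dotProduct_add, dotProduct_smul, hvdot k]
    have := hx0
    rw [hK] at this
    simpa using this k
  have hnorm : ‖x0 + t • v‖ ≤ C := hC _ hmemt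
  have hC0 : ‖x0‖ ≤ C := hC _ hx0
  have htv : ‖t • v‖ = C + ‖x0‖ + 1 := by
    rw [norm_smul, ht, Real.norm_eq_abs, abs_div, abs_of_nonneg (by have := norm_nonneg x0; linarith : (0:ℝ) ≤ C + ‖x0‖ + 1)]
    rw [abs_of_nonneg (norm_nonneg v)]
    field_simp
  have : ‖t • v‖ ≤ ‖x0 + t • v‖ + ‖x0‖ := by
    have := norm_sub_le (x0 + t • v) x0
    simpa using this
  linarith

/-- Kannan's Lemma (b): if every `n×n` subdeterminant of `S` has absolute value in
`[δ, Δ]` with `δ > 0`, and `K_u = {x : Sx ≤ u}` is bounded, then for any two rows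
`s⁽ⁱ⁾, s⁽ʲ⁾` of `S`, `width_{s⁽ⁱ⁾}(K_u) ≤ 2(Δ/δ)·width_{s⁽ʲ⁾}(K_u)`. -/
theorem stmt_4 (m n : ℕ) (S : Matrix (Fin m) (Fin n) ℤ) (u : Fin m → ℝ)
    (Δ δ : ℝ) (hδ : 0 < δ)
    (hsub : ∀ f : Fin n → Fin m, Function.Injective f →
      δ ≤ |((S.submatrix f id).det : ℝ)| ∧ |((S.submatrix f id).det : ℝ)| ≤ Δ)
    (K : Set (Fin n → ℝ))
    (hKdef : K = {x | ∀ i, ∑ l, (S i l : ℝ) * x l ≤ u i})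
    (hbdd : Bornology.IsBounded K) :
    ∀ i j : Fin m,
      sSup ((fun x => ∑ l, (S i l : ℝ) * x l) '' K) -
          sInf ((fun x => ∑ l, (S i l : ℝ) * x l) '' K) ≤
        2 * (Δ / δ) *
          (sSup ((fun x => ∑ l, (S j l : ℝ) * x l) '' K) -
            sInf ((fun x => ∑ l, (S j l : ℝ) * x l) '' K)) := by
  intro i j
  set s : Fin m → Fin n → ℝ := fun k l => (S k l : ℝ) with hs
  have hfun : ∀ k : Fin m, (fun x : Fin n → ℝ => ∑ l, (S k l : ℝ) * x l) =
      (fun x => s k ⬝ᵥ x) := fun k => rfl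
  rw [hfun i, hfun j]
  have hKs : K = {x | ∀ k, s k ⬝ᵥ x ≤ u k} := hKdef
  rcases Set.eq_empty_or_nonempty K with hKe | hKne
  · rw [hKe]
    simp [Real.sSup_empty, Real.sInf_empty]
  have hmn : n ≤ m := by
    by_contra h
    push_neg at h
    exact unbounded_of_lt h s u K hKs hKne hbdd
  have hδΔ : δ ≤ Δ := by
    have hinj : Function.Injective (Fin.castLE hmn) := Fin.castLE_injective hmn
    exact le_trans (hsub _ hinj).1 (hsub _ hinj).2
  have hΔ0 : 0 < Δ := lt_of_lt_of_le hδ hδΔ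
  have hKcl : IsClosed K := by
    rw [hKs]
    have : {x : Fin n → ℝ | ∀ k, s k ⬝ᵥ x ≤ u k} = ⋂ k, {x | s k ⬝ᵥ x ≤ u k} := by
      ext x; simp
    rw [this]
    exact isClosed_iInter fun k => isClosed_le (dot_continuous (s k)) continuous_const
  have hKcomp : IsCompact K := Metric.isCompact_of_isClosed_isBounded hKcl hbdd
  have hbddA : ∀ k : Fin m, BddAbove ((fun x => s k ⬝ᵥ x) '' K) ∧
      BddBelow ((fun x => s k ⬝ᵥ x) '' K) := by
    intro k
    have := hKcomp.image (dot_continuous (s k))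
    exact ⟨this.bddAbove, this.bddBelow⟩
  have hAne : ∀ k : Fin m, ((fun x => s k ⬝ᵥ x) '' K).Nonempty :=
    fun k => hKne.image _
  set Wj : ℝ := sSup ((fun x => s j ⬝ᵥ x) '' K) - sInf ((fun x => s j ⬝ᵥ x) '' K) with hWj
  obtain ⟨z, R, p, hzK, hp0, htight, hrep, hind⟩ := exists_dual s u K hKs hKcomp hKne j
  -- j ∉ R
  have hjR : j ∉ R := by
    intro hjR
    set G : Fin m → ℝ := fun k => (if k ∈ R then p k else 0) + (if k = j then 1 else 0) with hG
    have h1 : ∑ k ∈ R, ((if k ∈ R then p k else 0) • s k) = ∑ k ∈ R, p k • s k :=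
      Finset.sum_congr rfl fun k hk => by rw [if_pos hk]
    have h2 : ∑ k ∈ R, ((if k = j then (1:ℝ) else 0) • s k) = s j := by
      have he : ∀ k ∈ R, ((if k = j then (1:ℝ) else 0) • s k) = if k = j then s k else 0 :=
        fun k _ => by split <;> simp
      rw [Finset.sum_congr rfl he, Finset.sum_ite_eq' R j (fun k => s k), if_pos hjR]
    have hsum : ∑ k ∈ R, G k • s k = 0 := by
      calc ∑ k ∈ R, G k • s k
          = ∑ k ∈ R, (((if k ∈ R then p k else 0) • s k) +
            ((if k = j then (1:ℝ) else 0) • s k)) := by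
            refine Finset.sum_congr rfl fun k _ => ?_
            rw [hG, add_smul]
        _ = ∑ k ∈ R, ((if k ∈ R then p k else 0) • s k) +
            ∑ k ∈ R, ((if k = j then (1:ℝ) else 0) • s k) := Finset.sum_add_distrib
        _ = ∑ k ∈ R, p k • s k + s j := by rw [h1, h2]
        _ = 0 := by rw [← hrep]; simp
    have hz := (Fintype.linearIndependent_iff.mp hind) (fun k => G (k : Fin m))
      (by rw [← Finset.sum_coe_sort R (fun k => G k • s k)] at hsum; exact hsum) ⟨j, hjR⟩
    rw [hG] at hz
    simp only [if_pos hjR, if_pos rfl] at hz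
    have := hp0 j
    simp at hz
    linarith
  -- R.card = n
  have hcard_le : R.card ≤ n := by
    have h := hind.fintype_card_le_finrank
    rwa [Fintype.card_coe, Module.finrank_pi, Fintype.card_fin] at h
  have hcardn : R.card = n := by
    by_contra hne'
    have hlt : R.card + 1 ≤ n := by omega
    set R' : Finset (Fin m) := insert j R with hR'
    have hjR' : j ∈ R' := Finset.mem_insert_self j R
    have hcard' : R'.card ≤ n := by
      rw [hR', Finset.card_insert_of_notMem hjR]; exact hlt
    have hind' := rows_indep S δ hδ (fun f hf => (hsub f hf).1) hmn R' hcard'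
    set G : Fin m → ℝ := fun k => (if k ∈ R then p k else 0) + (if k = j then 1 else 0) with hG
    have h1 : ∑ k ∈ R', ((if k ∈ R then p k else 0) • s k) = ∑ k ∈ R, p k • s k := by
      rw [hR', Finset.sum_insert hjR]
      have : ((if j ∈ R then p j else 0) • s j) = 0 := by rw [if_neg hjR, zero_smul]
      rw [this, zero_add]
      exact Finset.sum_congr rfl fun k hk => by rw [if_pos hk]
    have h2 : ∑ k ∈ R', ((if k = j then (1:ℝ) else 0) • s k) = s j := by
      have he : ∀ k ∈ R', ((if k = j then (1:ℝ) else 0) • s k) = if k = j then s k else 0 :=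
        fun k _ => by split <;> simp
      rw [Finset.sum_congr rfl he, Finset.sum_ite_eq' R' j (fun k => s k), if_pos hjR']
    have hsum : ∑ k ∈ R', G k • s k = 0 := by
      calc ∑ k ∈ R', G k • s k
          = ∑ k ∈ R', (((if k ∈ R then p k else 0) • s k) +
            ((if k = j then (1:ℝ) else 0) • s k)) := by
            refine Finset.sum_congr rfl fun k _ => ?_
            rw [hG, add_smul]
        _ = ∑ k ∈ R', ((if k ∈ R then p k else 0) • s k) +
            ∑ k ∈ R', ((if k = j then (1:ℝ) else 0) • s k) := Finset.sum_add_distrib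
        _ = ∑ k ∈ R, p k • s k + s j := by rw [h1, h2]
        _ = 0 := by rw [← hrep]; simp
    have hz := (Fintype.linearIndependent_iff.mp hind') (fun k => G (k : Fin m))
      (by rw [← Finset.sum_coe_sort R' (fun k => G k • s k)] at hsum; exact hsum) ⟨j, hjR'⟩
    rw [hG] at hz
    simp only [if_neg hjR, if_pos rfl] at hz
    simp at hz
  -- enumerate R by Fin n
  set isoR := R.orderIsoOfFin hcardn with hisoR
  set finj : Fin n → Fin m := fun a => ((isoR a : {x // x ∈ R}) : Fin m) with hfinj
  have hfinj_inj : Function.Injective finj := by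
    intro a b hab
    apply isoR.injective
    exact Subtype.ext hab
  have hfinjR : ∀ a, finj a ∈ R := fun a => (isoR a).2
  have hjfinj : ∀ a, finj a ≠ j := fun a h => hjR (h ▸ hfinjR a)
  have hsum_reindex : ∀ f : Fin m → (Fin n → ℝ), ∑ k ∈ R, f k = ∑ a, f (finj a) := by
    intro f
    rw [← Finset.sum_coe_sort R f]
    exact (Equiv.sum_comp isoR.toEquiv (fun k => f (k : Fin m))).symm
  set A : Matrix (Fin n) (Fin n) ℝ := (S.submatrix finj id).map (Int.castRingHom ℝ) with hA
  have hAdet : A.det = ((S.submatrix finj id).det : ℝ) := ((Int.castRingHom ℝ).map_det _).symm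
  have hAdet_low : δ ≤ |A.det| := by rw [hAdet]; exact (hsub finj hfinj_inj).1
  have hAdet_pos : 0 < |A.det| := lt_of_lt_of_le hδ hAdet_low
  have hAdet_ne : A.det ≠ 0 := by
    intro h; rw [h] at hAdet_pos; simp at hAdet_pos
  -- coefficients
  set q : Fin n → ℝ := fun a => p (finj a) with hq
  have hq0 : ∀ a, 0 ≤ q a := fun a => hp0 _
  have htightq : ∀ a, s (finj a) ⬝ᵥ z = u (finj a) := fun a => htight _ (hfinjR a)
  have hqrep : -(s j) = ∑ a, q a • s (finj a) := by
    rw [hrep, hsum_reindex (fun k => p k • s k)]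
  have hvm : ∀ w : Fin n → ℝ, w ᵥ* A = ∑ a, w a • s (finj a) := by
    intro w
    funext l
    simp [Matrix.vecMul, dotProduct, Finset.sum_apply, hA, hs,
      Matrix.map_apply, Matrix.submatrix_apply]
  have hAunit : IsUnit A := (Matrix.isUnit_iff_isUnit_det A).mpr (isUnit_iff_ne_zero.mpr hAdet_ne)
  have hvm_inj : Function.Injective (fun w : Fin n → ℝ => w ᵥ* A) :=
    Matrix.vecMul_injective_iff_isUnit.mpr hAunit
  have hcramer : ∀ b : Fin n → ℝ, (fun a => A.det⁻¹ * cramer Aᵀ b a) ᵥ* A = b := by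
    intro b
    have h1 : (cramer Aᵀ b) ᵥ* A = A.det • b := by
      rw [← Matrix.mulVec_transpose, Matrix.mulVec_cramer Aᵀ b, Matrix.det_transpose]
    have h2 : (fun a => A.det⁻¹ * cramer Aᵀ b a) = A.det⁻¹ • (cramer Aᵀ b) := rfl
    rw [h2, Matrix.smul_vecMul, h1]
    funext l
    simp only [Pi.smul_apply, smul_eq_mul]
    field_simp
  have hq_eq : ∀ a, q a = A.det⁻¹ * cramer Aᵀ (-(s j)) a := by
    have heq : q ᵥ* A = (fun a => A.det⁻¹ * cramer Aᵀ (-(s j)) a) ᵥ* A := by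
      rw [hcramer, hvm q, ← hqrep]
    have := hvm_inj heq
    exact fun a => congrFun this a
  have hupdate : ∀ (a : Fin n) (r : Fin m),
      A.updateRow a (s r) = (S.submatrix (Function.update finj a r) id).map (Int.castRingHom ℝ) := by
    intro a r
    ext b l
    rw [Matrix.updateRow_apply]
    by_cases hba : b = a
    · subst hba
      simp [Matrix.map_apply, Matrix.submatrix_apply, Function.update_self, hs]
    · simp [hba, Matrix.map_apply, Matrix.submatrix_apply, Function.update_of_ne hba, hA]
  have hdet_upd : ∀ (a : Fin n) (r : Fin m), (A.updateRow a (s r)).det =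
      (((S.submatrix (Function.update finj a r) id).det : ℤ) : ℝ) := by
    intro a r
    rw [hupdate a r]
    exact ((Int.castRingHom ℝ).map_det _).symm
  have hdet_col : ∀ (a : Fin n) (w : Fin n → ℝ),
      (Aᵀ.updateCol a w).det = (A.updateRow a w).det := by
    intro a w
    rw [Matrix.updateCol_transpose, Matrix.det_transpose]
  have hupd_inj : ∀ a : Fin n, Function.Injective (Function.update finj a j) := by
    intro a x y hxy
    rcases eq_or_ne x a with hx | hx <;> rcases eq_or_ne y a with hy | hy
    · rw [hx, hy]
    · exfalso
      rw [hx, Function.update_self, Function.update_of_ne hy] at hxy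
      exact hjfinj y hxy.symm
    · exfalso
      rw [hy, Function.update_self, Function.update_of_ne hx] at hxy
      exact hjfinj x hxy
    · rw [Function.update_of_ne hx, Function.update_of_ne hy] at hxy
      exact hfinj_inj hxy
  have hqa_low : ∀ a, δ / |A.det| ≤ q a := by
    intro a
    have h2 : cramer Aᵀ (-(s j)) a = (Aᵀ.updateCol a (-(s j))).det := Matrix.cramer_apply _ _ _
    have h4 : (A.updateRow a (-(s j))).det = - (A.updateRow a (s j)).det := by
      have hneg : (-(s j)) = (-1 : ℝ) • (s j) := by funext l; simp
      rw [hneg, Matrix.det_updateRow_smul]; ring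
    have h5 : δ ≤ |(A.updateRow a (s j)).det| := by
      rw [hdet_upd a j]; exact (hsub _ (hupd_inj a)).1
    have habs : |q a| = |(A.updateRow a (s j)).det| / |A.det| := by
      rw [hq_eq a, h2, hdet_col, h4, abs_mul, abs_inv, abs_neg]
      rw [inv_mul_eq_div]
    calc δ / |A.det| ≤ |(A.updateRow a (s j)).det| / |A.det| := by gcongr
      _ = |q a| := habs.symm
      _ = q a := abs_of_nonneg (hq0 a)
  set cv : Fin n → ℝ := fun a => A.det⁻¹ * cramer Aᵀ (s i) a with hcv
  have hcvrep : s i = ∑ a, cv a • s (finj a) := by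
    have := hcramer (s i)
    rw [hvm] at this
    exact this.symm
  have hcv_abs : ∀ a, |cv a| ≤ Δ / |A.det| := by
    intro a
    have h2 : cramer Aᵀ (s i) a = (Aᵀ.updateCol a (s i)).det := Matrix.cramer_apply _ _ _
    have h5 : |(A.updateRow a (s i)).det| ≤ Δ := by
      by_cases hin : Function.Injective (Function.update finj a i)
      · rw [hdet_upd a i]; exact (hsub _ hin).2
      · have hex : ∃ b, b ≠ a ∧ finj b = i := by
          by_contra hno
          push_neg at hno
          apply hin
          intro x y hxy
          rcases eq_or_ne x a with hx | hx <;> rcases eq_or_ne y a with hy | hy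
          · rw [hx, hy]
          · exfalso
            rw [hx, Function.update_self, Function.update_of_ne hy] at hxy
            exact (hno y hy) hxy.symm
          · exfalso
            rw [hy, Function.update_self, Function.update_of_ne hx] at hxy
            exact (hno x hx) hxy
          · rw [Function.update_of_ne hx, Function.update_of_ne hy] at hxy
            exact hfinj_inj hxy
        obtain ⟨b, hba, hbi⟩ := hex
        have hrows_eq : (A.updateRow a (s i)) b = (A.updateRow a (s i)) a := by
          rw [Matrix.updateRow_self, Matrix.updateRow_ne hba]
          funext l
          simp [hA, Matrix.map_apply, Matrix.submatrix_apply, hbi, hs]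
        rw [Matrix.det_zero_of_row_eq hba hrows_eq]
        simpa using hΔ0.le
    have habs : |cv a| = |(A.updateRow a (s i)).det| / |A.det| := by
      rw [hcv]
      simp only []
      rw [h2, hdet_col, abs_mul, abs_inv, inv_mul_eq_div]
    rw [habs]
    gcongr
  have hcv_q : ∀ a, |cv a| ≤ (Δ/δ) * q a := by
    intro a
    calc |cv a| ≤ Δ / |A.det| := hcv_abs a
      _ = (Δ/δ) * (δ/|A.det|) := by
          field_simp
      _ ≤ (Δ/δ) * q a := by
          exact mul_le_mul_of_nonneg_left (hqa_low a) (div_nonneg hΔ0.le hδ.le)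
  -- slack identities
  have hslack0 : ∀ (a : Fin n), ∀ x ∈ K, 0 ≤ u (finj a) - s (finj a) ⬝ᵥ x := by
    intro a x hx
    rw [hKs] at hx
    have := hx (finj a)
    linarith
  have hdotsum : ∀ (w : Fin n → ℝ) (x : Fin n → ℝ),
      (∑ a, w a • s (finj a)) ⬝ᵥ x = ∑ a, w a * (s (finj a) ⬝ᵥ x) := by
    intro w x
    calc (∑ a, w a • s (finj a)) ⬝ᵥ x
        = ∑ l, (∑ a, w a * s (finj a) l) * x l := by
          simp [dotProduct, Finset.sum_apply, smul_eq_mul]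
      _ = ∑ l, ∑ a, w a * s (finj a) l * x l :=
          Finset.sum_congr rfl fun l _ => Finset.sum_mul ..
      _ = ∑ a, ∑ l, w a * s (finj a) l * x l := Finset.sum_comm
      _ = ∑ a, w a * (s (finj a) ⬝ᵥ x) := by
          refine Finset.sum_congr rfl fun a _ => ?_
          rw [dotProduct, Finset.mul_sum]
          exact Finset.sum_congr rfl fun l _ => by ring
  have hslack_id : ∀ x ∈ K, ∑ a, q a * (u (finj a) - s (finj a) ⬝ᵥ x)
      = (s j ⬝ᵥ x) - (s j ⬝ᵥ z) := by
    intro x hx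
    have h1 : ∑ a, q a * (s (finj a) ⬝ᵥ x) = -(s j ⬝ᵥ x) := by
      rw [← hdotsum q x, ← hqrep, neg_dotProduct]
    have h2 : ∑ a, q a * (s (finj a) ⬝ᵥ z) = -(s j ⬝ᵥ z) := by
      rw [← hdotsum q z, ← hqrep, neg_dotProduct]
    have h3 : ∑ a, q a * u (finj a) = -(s j ⬝ᵥ z) := by
      rw [← h2]
      exact Finset.sum_congr rfl fun a _ => by rw [htightq a]
    calc ∑ a, q a * (u (finj a) - s (finj a) ⬝ᵥ x)
        = ∑ a, (q a * u (finj a) - q a * (s (finj a) ⬝ᵥ x)) :=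
          Finset.sum_congr rfl fun a _ => by ring
      _ = ∑ a, q a * u (finj a) - ∑ a, q a * (s (finj a) ⬝ᵥ x) := Finset.sum_sub_distrib ..
      _ = -(s j ⬝ᵥ z) - (-(s j ⬝ᵥ x)) := by rw [h3, h1]
      _ = (s j ⬝ᵥ x) - (s j ⬝ᵥ z) := by ring
  have hslack_le : ∀ x ∈ K, ∑ a, q a * (u (finj a) - s (finj a) ⬝ᵥ x) ≤ Wj := by
    intro x hx
    rw [hslack_id x hx, hWj]
    have h1 : s j ⬝ᵥ x ≤ sSup ((fun y => s j ⬝ᵥ y) '' K) :=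
      le_csSup (hbddA j).1 (Set.mem_image_of_mem _ hx)
    have h2 : sInf ((fun y => s j ⬝ᵥ y) '' K) ≤ s j ⬝ᵥ z :=
      csInf_le (hbddA j).2 (Set.mem_image_of_mem _ hzK)
    linarith
  -- pointwise bound
  have hpt : ∀ x ∈ K, ∀ y ∈ K, (s i ⬝ᵥ x) - (s i ⬝ᵥ y) ≤ 2 * (Δ/δ) * Wj := by
    intro x hx y hy
    have hix : s i ⬝ᵥ x = ∑ a, cv a * (s (finj a) ⬝ᵥ x) := by
      rw [← hdotsum, ← hcvrep]
    have hiy : s i ⬝ᵥ y = ∑ a, cv a * (s (finj a) ⬝ᵥ y) := by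
      rw [← hdotsum, ← hcvrep]
    have hdiff : (s i ⬝ᵥ x) - (s i ⬝ᵥ y) =
        ∑ a, cv a * ((u (finj a) - s (finj a) ⬝ᵥ y) - (u (finj a) - s (finj a) ⬝ᵥ x)) := by
      rw [hix, hiy, ← Finset.sum_sub_distrib]
      exact Finset.sum_congr rfl fun a _ => by ring
    rw [hdiff]
    have hterm : ∀ a ∈ Finset.univ (α := Fin n),
        cv a * ((u (finj a) - s (finj a) ⬝ᵥ y) - (u (finj a) - s (finj a) ⬝ᵥ x)) ≤
        (Δ/δ) * (q a * ((u (finj a) - s (finj a) ⬝ᵥ y) + (u (finj a) - s (finj a) ⬝ᵥ x))) := by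
      intro a _
      set Ay := u (finj a) - s (finj a) ⬝ᵥ y with hAy
      set Ax := u (finj a) - s (finj a) ⬝ᵥ x with hAx
      have hAy0 : 0 ≤ Ay := hslack0 a y hy
      have hAx0 : 0 ≤ Ax := hslack0 a x hx
      have h1 : |Ay - Ax| ≤ Ay + Ax := by
        rw [abs_sub_le_iff]
        constructor <;> linarith
      calc cv a * (Ay - Ax) ≤ |cv a * (Ay - Ax)| := le_abs_self _
        _ = |cv a| * |Ay - Ax| := abs_mul _ _
        _ ≤ ((Δ/δ) * q a) * (Ay + Ax) := by
            apply mul_le_mul (hcv_q a) h1 (abs_nonneg _)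
            exact mul_nonneg (div_nonneg hΔ0.le hδ.le) (hq0 a)
        _ = (Δ/δ) * (q a * (Ay + Ax)) := by ring
    calc ∑ a, cv a * ((u (finj a) - s (finj a) ⬝ᵥ y) - (u (finj a) - s (finj a) ⬝ᵥ x))
        ≤ ∑ a, (Δ/δ) * (q a * ((u (finj a) - s (finj a) ⬝ᵥ y) + (u (finj a) - s (finj a) ⬝ᵥ x))) :=
          Finset.sum_le_sum hterm
      _ = (Δ/δ) * ((∑ a, q a * (u (finj a) - s (finj a) ⬝ᵥ y)) +
            (∑ a, q a * (u (finj a) - s (finj a) ⬝ᵥ x))) := by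
          rw [← Finset.mul_sum]
          congr 1
          rw [← Finset.sum_add_distrib]
          exact Finset.sum_congr rfl fun a _ => by ring
      _ ≤ (Δ/δ) * (Wj + Wj) := by
          apply mul_le_mul_of_nonneg_left _ (div_nonneg hΔ0.le hδ.le)
          linarith [hslack_le x hx, hslack_le y hy]
      _ = 2 * (Δ/δ) * Wj := by ring
  -- conclude
  have hfin : ∀ x ∈ K, s i ⬝ᵥ x - 2 * (Δ/δ) * Wj ≤ sInf ((fun y => s i ⬝ᵥ y) '' K) := by
    intro x hx
    apply le_csInf (hAne i)
    rintro b ⟨y, hy, rfl⟩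
    linarith [hpt x hx y hy]
  have hsup : sSup ((fun x => s i ⬝ᵥ x) '' K) ≤
      2 * (Δ/δ) * Wj + sInf ((fun y => s i ⬝ᵥ y) '' K) := by
    apply csSup_le (hAne i)
    rintro b ⟨x, hx, rfl⟩
    linarith [hfin x hx]
  linarith [hsup]
end

section
/- Let A ∈ ℤ^{d×n} of rank d, c generic, B ∈ ℤ^{n×(n−d)} with columns generating L = ker A ∩ ℤⁿ, and τ ⊆ {1,…,n}. For u ∈ ℕⁿ feasible for Ax = b, the group relaxation program minimize {(−cB)·z : B^{τ̄}z ≤ π_τ(u), z ∈ ℤ^{n−d}} is bounded if and only if τ is a face of the regular triangulation Δ_c. -/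
open Matrix
open Finset

/-- The `j`-th column of `A`, viewed as a real vector. -/
def colA {d n : ℕ} (A : Matrix (Fin d) (Fin n) ℤ) (j : Fin n) : Fin d → ℝ :=
  fun i => (A i j : ℝ)

/-- `τ` indexes a face of the regular triangulation `Δ_c`. -/
def IsDeltaFace {d n : ℕ} (A : Matrix (Fin d) (Fin n) ℤ) (c : Fin n → ℤ)
    (τ : Finset (Fin n)) : Prop :=
  ∃ y : Fin d → ℝ, (∀ j ∈ τ, y ⬝ᵥ colA A j = (c j : ℝ)) ∧
    ∀ j ∉ τ, y ⬝ᵥ colA A j < (c j : ℝ)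


theorem motzkin (d : ℕ) : ∀ {ι : Type} [Fintype ι] [DecidableEq ι]
    (a : ι → Fin d → ℚ) (b : ι → ℚ) (s : ι → Bool),
    (¬ ∃ y : Fin d → ℚ, ∀ t, (if s t then a t ⬝ᵥ y < b t else a t ⬝ᵥ y ≤ b t)) →
    ∃ l : ι → ℚ, (∀ t, 0 ≤ l t) ∧ (∀ i, ∑ t, l t * a t i = 0) ∧
      (∑ t, l t * b t < 0 ∨ (∑ t, l t * b t ≤ 0 ∧ ∃ t, s t = true ∧ 0 < l t)) := by
  induction d with
  | zero =>
    intro ι _ _ a b s h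
    push_neg at h
    obtain ⟨t, ht⟩ := h (fun _ => 0)
    have hdot : a t ⬝ᵥ (fun _ => 0) = 0 := by simp [dotProduct]
    refine ⟨fun t' => if t' = t then 1 else 0, ?_, ?_, ?_⟩
    · intro t'; dsimp only; split <;> norm_num
    · exact fun i => i.elim0
    · have hsum : ∑ t', (if t' = t then (1:ℚ) else 0) * b t' = b t := by
        rw [Finset.sum_eq_single t] <;> simp +contextual
      rw [hsum]
      by_cases hs : s t = true
      · rw [hs] at ht; simp only [if_true, hdot, not_lt] at ht
        rcases lt_or_eq_of_le ht with h1 | h1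
        · exact Or.inl h1
        · exact Or.inr ⟨le_of_eq h1, t, hs, by simp⟩
      · rw [Bool.not_eq_true] at hs; rw [hs] at ht
        simp only [Bool.false_eq_true, if_false, hdot, not_le] at ht
        exact Or.inl ht
  | succ d ih =>
    intro ι _ _ a b s h
    classical
    set α : ι → ℚ := fun t => a t (Fin.last d) with hαdef
    set a' : ι → Fin d → ℚ := fun t i => a t (Fin.castSucc i) with ha'def
    -- the projected (Fourier-Motzkin eliminated) system
    set A' : ι ⊕ ι × ι → Fin d → ℚ := fun t' => Sum.elim
      (fun t => if α t = 0 then a' t else 0)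
      (fun pq => if α pq.1 < 0 ∧ 0 < α pq.2 then
        (fun i => α pq.2 * a' pq.1 i + (-α pq.1) * a' pq.2 i) else 0) t' with hA'def
    set B' : ι ⊕ ι × ι → ℚ := fun t' => Sum.elim
      (fun t => if α t = 0 then b t else 0)
      (fun pq => if α pq.1 < 0 ∧ 0 < α pq.2 then
        α pq.2 * b pq.1 + (-α pq.1) * b pq.2 else 0) t' with hB'def
    set S' : ι ⊕ ι × ι → Bool := fun t' => Sum.elim
      (fun t => if α t = 0 then s t else false)
      (fun pq => if α pq.1 < 0 ∧ 0 < α pq.2 then (s pq.1 || s pq.2) else false) t' with hS'def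
    -- snoc dot product formula
    have hsnoc : ∀ (t : ι) (y' : Fin d → ℚ) (yd : ℚ),
        a t ⬝ᵥ Fin.snoc y' yd = a' t ⬝ᵥ y' + α t * yd := by
      intro t y' yd
      simp [dotProduct, Fin.sum_univ_castSucc, ha'def, hαdef]
    -- the projected system is infeasible
    have hproj : ¬ ∃ y' : Fin d → ℚ, ∀ t',
        (if S' t' then A' t' ⬝ᵥ y' < B' t' else A' t' ⬝ᵥ y' ≤ B' t') := by
      rintro ⟨y', hy'⟩
      apply h
      set D : ι → ℚ := fun t => a' t ⬝ᵥ y' with hDdef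
      set L : ι → ℚ := fun t => (b t - D t) / α t with hLdef
      -- facts from the projected system
      have hz : ∀ t, α t = 0 → (if s t then D t < b t else D t ≤ b t) := by
        intro t ht
        have := hy' (Sum.inl t)
        simp only [hA'def, hB'def, hS'def, Sum.elim_inl, ht, if_true] at this
        simpa [hDdef] using this
      have hdot2 : ∀ (c1 c2 : ℚ) (x z : Fin d → ℚ),
          (fun i => c1 * x i + c2 * z i) ⬝ᵥ y' = c1 * (x ⬝ᵥ y') + c2 * (z ⬝ᵥ y') := by
        intro c1 c2 x z
        simp [dotProduct, add_mul, mul_assoc, Finset.sum_add_distrib, Finset.mul_sum]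
      have hLmul : ∀ t, α t ≠ 0 → α t * L t = b t - D t := by
        intro t ht; rw [hLdef]; field_simp
      have hpair : ∀ p q, α p < 0 → 0 < α q →
          ((α q * D p + (-α p) * D q ≤ α q * b p + (-α p) * b q) ∧
           ((s p || s q) = true → α q * D p + (-α p) * D q < α q * b p + (-α p) * b q)) := by
        intro p q hp hq
        have hc : α p < 0 ∧ 0 < α q := ⟨hp, hq⟩
        have := hy' (Sum.inr (p, q))
        simp only [hA'def, hB'def, hS'def, Sum.elim_inr, if_pos hc] at this
        rw [hdot2] at this
        constructor
        · split at this
          · exact le_of_lt this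
          · exact this
        · intro hst
          rw [hst] at this
          simpa using this
      have hple : ∀ p q, α p < 0 → 0 < α q → L p ≤ L q := by
        intro p q hp hq
        have h1 := (hpair p q hp hq).1
        have e1 := hLmul p (ne_of_lt hp)
        have e2 := hLmul q (ne_of_gt hq)
        have h3 : 0 ≤ α q * (α p * L p) + (-α p) * (α q * L q) := by rw [e1, e2]; linarith
        nlinarith [h3, mul_neg_of_neg_of_pos hp hq]
      have hplt : ∀ p q, α p < 0 → 0 < α q → (s p || s q) = true → L p < L q := by
        intro p q hp hq hst
        have h1 := (hpair p q hp hq).2 hst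
        have e1 := hLmul p (ne_of_lt hp)
        have e2 := hLmul q (ne_of_gt hq)
        have h3 : 0 < α q * (α p * L p) + (-α p) * (α q * L q) := by rw [e1, e2]; linarith
        nlinarith [h3, mul_neg_of_neg_of_pos hp hq]
      -- given a suitable value for the last coordinate, the original system is feasible
      have main : ∀ yd : ℚ,
          (∀ t, α t < 0 → (if s t then L t < yd else L t ≤ yd)) →
          (∀ t, 0 < α t → (if s t then yd < L t else yd ≤ L t)) →
          ∃ y : Fin (d+1) → ℚ, ∀ t, (if s t then a t ⬝ᵥ y < b t else a t ⬝ᵥ y ≤ b t) := by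
        intro yd hlow hup
        refine ⟨Fin.snoc y' yd, fun t => ?_⟩
        rw [hsnoc]
        rcases lt_trichotomy (α t) 0 with hαt | hαt | hαt
        · have key := hLmul t (ne_of_lt hαt)
          have hl := hlow t hαt
          split
          next hst =>
            rw [if_pos hst] at hl
            nlinarith [mul_lt_mul_of_neg_left hl hαt]
          next hst =>
            rw [if_neg hst] at hl
            nlinarith [mul_le_mul_of_nonpos_left hl (le_of_lt hαt)]
        · have := hz t hαt
          rw [hαt, zero_mul, add_zero]
          exact this
        · have key := hLmul t (ne_of_gt hαt)
          have hl := hup t hαt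
          split
          next hst =>
            rw [if_pos hst] at hl
            nlinarith [mul_lt_mul_of_pos_left hl hαt]
          next hst =>
            rw [if_neg hst] at hl
            nlinarith [mul_le_mul_of_nonneg_left hl (le_of_lt hαt)]
      -- choose the last coordinate
      set N : Finset ι := univ.filter (fun t => α t < 0) with hNdef
      set P : Finset ι := univ.filter (fun t => 0 < α t) with hPdef
      by_cases hNne : N.Nonempty
      · by_cases hPne : P.Nonempty
        · have hle : N.sup' hNne L ≤ P.inf' hPne L := by
            apply Finset.sup'_le
            intro p hp
            apply Finset.le_inf'
            intro q hq
            exact hple p q (by simpa [hNdef] using hp) (by simpa [hPdef] using hq)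
          rcases lt_or_eq_of_le hle with hlt | heq
          · refine main ((N.sup' hNne L + P.inf' hPne L)/2) ?_ ?_
            · intro t ht
              have h1 : L t ≤ N.sup' hNne L := Finset.le_sup' L (by simp [hNdef, ht])
              split <;> linarith
            · intro t ht
              have h1 : P.inf' hPne L ≤ L t := Finset.inf'_le L (by simp [hPdef, ht])
              split <;> linarith
          · obtain ⟨p0, hp0mem, hp0⟩ := Finset.exists_mem_eq_sup' hNne L
            obtain ⟨q0, hq0mem, hq0⟩ := Finset.exists_mem_eq_inf' hPne L
            have hp0n : α p0 < 0 := by simpa [hNdef] using hp0mem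
            have hq0p : 0 < α q0 := by simpa [hPdef] using hq0mem
            refine main (N.sup' hNne L) ?_ ?_
            · intro t ht
              have h1 : L t ≤ N.sup' hNne L := Finset.le_sup' L (by simp [hNdef, ht])
              split
              next hst =>
                have h2 := hplt t q0 ht hq0p (by rw [hst]; simp)
                rw [← hq0] at h2
                linarith
              next _ => exact h1
            · intro t ht
              have h1 : P.inf' hPne L ≤ L t := Finset.inf'_le L (by simp [hPdef, ht])
              split
              next hst =>
                have h2 := hplt p0 t hp0n ht (by rw [hst]; simp)
                rw [← hp0] at h2
                exact h2
              next _ => linarith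
        · refine main (N.sup' hNne L + 1) ?_ ?_
          · intro t ht
            have h1 : L t ≤ N.sup' hNne L := Finset.le_sup' L (by simp [hNdef, ht])
            split <;> linarith
          · intro t ht
            exact absurd ⟨t, by simp [hPdef, ht]⟩ hPne
      · by_cases hPne : P.Nonempty
        · refine main (P.inf' hPne L - 1) ?_ ?_
          · intro t ht
            exact absurd ⟨t, by simp [hNdef, ht]⟩ hNne
          · intro t ht
            have h1 : P.inf' hPne L ≤ L t := Finset.inf'_le L (by simp [hPdef, ht])
            split <;> linarith
        · refine main 0 ?_ ?_
          · intro t ht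
            exact absurd ⟨t, by simp [hNdef, ht]⟩ hNne
          · intro t ht
            exact absurd ⟨t, by simp [hPdef, ht]⟩ hPne
    -- apply the inductive hypothesis
    obtain ⟨ll, hll0, hllA, hllD⟩ := ih A' B' S' hproj
    set l : ι → ℚ := fun t =>
      (if α t = 0 then ll (Sum.inl t) else 0)
      + (∑ q, if α t < 0 ∧ 0 < α q then ll (Sum.inr (t, q)) * α q else 0)
      + (∑ p, if α p < 0 ∧ 0 < α t then ll (Sum.inr (p, t)) * (-α p) else 0) with hldef
    have hIfnn : ∀ t, (0:ℚ) ≤ (if α t = 0 then ll (Sum.inl t) else 0) := by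
      intro t; split
      · exact hll0 _
      · exact le_refl 0
    have hS1nn : ∀ t, (0:ℚ) ≤ ∑ q, if α t < 0 ∧ 0 < α q then ll (Sum.inr (t, q)) * α q else 0 := by
      intro t
      apply Finset.sum_nonneg
      intro q _
      split
      next hc => exact mul_nonneg (hll0 _) (le_of_lt hc.2)
      next => exact le_refl 0
    have hS2nn : ∀ t, (0:ℚ) ≤ ∑ p, if α p < 0 ∧ 0 < α t then ll (Sum.inr (p, t)) * (-α p) else 0 := by
      intro t
      apply Finset.sum_nonneg
      intro p _
      split
      next hc => exact mul_nonneg (hll0 _) (by linarith [hc.1])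
      next => exact le_refl 0
    have hl0 : ∀ t, 0 ≤ l t := by
      intro t
      rw [hldef]
      exact add_nonneg (add_nonneg (hIfnn t) (hS1nn t)) (hS2nn t)
    -- key expansion
    have key : ∀ v : ι → ℚ, ∑ t, l t * v t =
        (∑ t, if α t = 0 then ll (Sum.inl t) * v t else 0)
        + ∑ p, ∑ q, (if α p < 0 ∧ 0 < α q then
            ll (Sum.inr (p, q)) * (α q * v p + (-α p) * v q) else 0) := by
      intro v
      have e1 : ∀ t, l t * v t =
          (if α t = 0 then ll (Sum.inl t) * v t else 0)
          + (∑ q, if α t < 0 ∧ 0 < α q then ll (Sum.inr (t, q)) * (α q * v t) else 0)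
          + (∑ p, if α p < 0 ∧ 0 < α t then ll (Sum.inr (p, t)) * ((-α p) * v t) else 0) := by
        intro t
        rw [hldef]
        dsimp only
        rw [add_mul, add_mul, Finset.sum_mul, Finset.sum_mul]
        congr 1
        congr 1
        · split <;> ring
        · apply Finset.sum_congr rfl; intro q _; split <;> ring
        · apply Finset.sum_congr rfl; intro p _; split <;> ring
      rw [Finset.sum_congr rfl (fun t _ => e1 t), Finset.sum_add_distrib, Finset.sum_add_distrib,
        add_assoc]
      congr 1
      rw [Finset.sum_comm (s := (univ : Finset ι)) (t := (univ : Finset ι))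
        (f := fun t p => if α p < 0 ∧ 0 < α t then ll (Sum.inr (p, t)) * ((-α p) * v t) else 0),
        ← Finset.sum_add_distrib]
      apply Finset.sum_congr rfl; intro p _
      rw [← Finset.sum_add_distrib]
      apply Finset.sum_congr rfl; intro q _
      split
      next => rw [mul_add]
      next => rw [add_zero]
    -- the b-sum matches
    have hcombB : ∑ t, l t * b t = ∑ t', ll t' * B' t' := by
      rw [key b, Fintype.sum_sum_type, Fintype.sum_prod_type]
      congr 1
      · apply Finset.sum_congr rfl; intro t _
        simp only [hB'def, Sum.elim_inl]
        split <;> simp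
      · apply Finset.sum_congr rfl; intro p _
        apply Finset.sum_congr rfl; intro q _
        simp only [hB'def, Sum.elim_inr]
        split <;> simp
    -- the a-sums vanish
    have hcombA : ∀ i, ∑ t, l t * a t i = 0 := by
      intro i
      rw [key (fun t => a t i)]
      induction i using Fin.lastCases with
      | last =>
        have e : ∀ r : ι, a r (Fin.last d) = α r := fun _ => rfl
        rw [Finset.sum_eq_zero, Finset.sum_eq_zero, add_zero]
        · intro p _
          apply Finset.sum_eq_zero
          intro q _
          split
          next => rw [e, e]; ring
          next => rfl
        · intro t _
          split
          next hc => rw [e, hc, mul_zero]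
          next => rfl
      | cast j =>
        have e : ∀ r : ι, a r (Fin.castSucc j) = a' r j := fun _ => rfl
        have := hllA j
        rw [Fintype.sum_sum_type, Fintype.sum_prod_type] at this
        refine Eq.trans ?_ this
        congr 1
        · apply Finset.sum_congr rfl; intro t _
          simp only [hA'def, Sum.elim_inl]
          rw [apply_ite (fun f : Fin d → ℚ => f j)]
          split
          next => rw [e]
          next => simp
        · apply Finset.sum_congr rfl; intro p _
          apply Finset.sum_congr rfl; intro q _
          simp only [hA'def, Sum.elim_inr]
          rw [apply_ite (fun f : Fin d → ℚ => f j)]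
          split
          next => rw [e, e]
          next => simp
    refine ⟨l, hl0, hcombA, ?_⟩
    rw [hcombB]
    rcases hllD with hlt | ⟨hle0, t', hs', hpos⟩
    · exact Or.inl hlt
    · refine Or.inr ⟨hle0, ?_⟩
      rcases t' with t | ⟨p, q⟩
      · simp only [hS'def, Sum.elim_inl] at hs'
        by_cases hαt : α t = 0
        · rw [if_pos hαt] at hs'
          refine ⟨t, hs', ?_⟩
          have h1 := hS1nn t
          have h2 := hS2nn t
          rw [hldef]
          dsimp only
          rw [if_pos hαt]
          linarith [hpos]
        · rw [if_neg hαt] at hs'; exact absurd hs' (by simp)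
      · simp only [hS'def, Sum.elim_inr] at hs'
        by_cases hc : α p < 0 ∧ 0 < α q
        · rw [if_pos hc] at hs'
          rcases Bool.or_eq_true_iff.mp hs' with hsp | hsq
          · refine ⟨p, hsp, ?_⟩
            have hterm : ll (Sum.inr (p, q)) * α q ≤
                ∑ q', if α p < 0 ∧ 0 < α q' then ll (Sum.inr (p, q')) * α q' else 0 := by
              have hnn : ∀ q' ∈ (univ : Finset ι),
                  (0:ℚ) ≤ (if α p < 0 ∧ 0 < α q' then ll (Sum.inr (p, q')) * α q' else 0) := by
                intro q' _
                split
                next hcc => exact mul_nonneg (hll0 _) (le_of_lt hcc.2)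
                next => exact le_refl 0
              have := Finset.single_le_sum hnn (Finset.mem_univ q)
              rwa [if_pos hc] at this
            have hpos2 : 0 < ll (Sum.inr (p, q)) * α q := mul_pos hpos hc.2
            have h0 := hIfnn p
            have h2 := hS2nn p
            rw [hldef]
            dsimp only
            linarith
          · refine ⟨q, hsq, ?_⟩
            have hterm : ll (Sum.inr (p, q)) * (-α p) ≤
                ∑ p', if α p' < 0 ∧ 0 < α q then ll (Sum.inr (p', q)) * (-α p') else 0 := by
              have hnn : ∀ p' ∈ (univ : Finset ι),
                  (0:ℚ) ≤ (if α p' < 0 ∧ 0 < α q then ll (Sum.inr (p', q)) * (-α p') else 0) := by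
                intro p' _
                split
                next hcc => exact mul_nonneg (hll0 _) (by linarith [hcc.1])
                next => exact le_refl 0
              have := Finset.single_le_sum hnn (Finset.mem_univ p)
              rwa [if_pos hc] at this
            have hpos2 : 0 < ll (Sum.inr (p, q)) * (-α p) := mul_pos hpos (by linarith [hc.1])
            have h0 := hIfnn q
            have h1 := hS1nn q
            rw [hldef]
            dsimp only
            linarith
        · rw [if_neg hc] at hs'; exact absurd hs' (by simp)

/-- The group relaxation `G^τ(b)`, reformulated as
`min {(−cB)·z : B^{τ̄} z ≤ π_τ(u), z ∈ ℤ^{n−d}}`, is bounded below if and only if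
`τ` is a face of the regular triangulation `Δ_c`. -/
theorem stmt_10 (d n : ℕ) (A : Matrix (Fin d) (Fin n) ℤ) (c : Fin n → ℤ)
    (B : Matrix (Fin n) (Fin (n - d)) ℤ)
    (hrank : A.rank = d)
    (hker : ∀ v : Fin n → ℝ,
      (A.map (Int.cast : ℤ → ℝ)).mulVec v = 0 → (∀ i, 0 ≤ v i) → v = 0)
    (hgen : ∀ x y : Fin n → ℕ,
      A.mulVec (fun i => (x i : ℤ)) = A.mulVec (fun i => (y i : ℤ)) →
      (∑ i, c i * (x i : ℤ)) = (∑ i, c i * (y i : ℤ)) → x = y)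
    (hB : ∀ v : Fin n → ℤ, A.mulVec v = 0 ↔ ∃ z : Fin (n - d) → ℤ, v = B.mulVec z)
    (τ : Finset (Fin n)) (u : Fin n → ℕ) :
    (∃ m : ℤ, ∀ z : Fin (n - d) → ℤ,
        (∀ i ∉ τ, B.mulVec z i ≤ (u i : ℤ)) →
        m ≤ -(∑ i, c i * B.mulVec z i)) ↔
    IsDeltaFace A c τ := by
  constructor
  · -- boundedness implies face
    intro hbdd
    by_contra hnot
    classical
    set aQ : Fin n → Fin d → ℚ := fun j i => (A i j : ℚ) with haQ
    set sy : Fin n ⊕ Fin n → Bool := fun t => Sum.elim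
      (fun j => if j ∈ τ then false else true) (fun _ => false) t with hsy
    set av : Fin n ⊕ Fin n → Fin d → ℚ := fun t => Sum.elim
      (fun j => aQ j) (fun j => if j ∈ τ then -aQ j else 0) t with hav
    set bv : Fin n ⊕ Fin n → ℚ := fun t => Sum.elim
      (fun j => (c j : ℚ)) (fun j => if j ∈ τ then -(c j : ℚ) else 0) t with hbv
    have hcast : ∀ (y : Fin d → ℚ) (j : Fin n),
        (fun i => ((y i : ℝ))) ⬝ᵥ colA A j = ((aQ j ⬝ᵥ y : ℚ) : ℝ) := by
      intro y j
      simp only [dotProduct, colA, haQ]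
      push_cast
      apply Finset.sum_congr rfl
      intros; ring
    -- the rational system is infeasible
    have hinf : ¬ ∃ y : Fin d → ℚ, ∀ t, (if sy t then av t ⬝ᵥ y < bv t else av t ⬝ᵥ y ≤ bv t) := by
      rintro ⟨y, hy⟩
      apply hnot
      refine ⟨fun i => (y i : ℝ), ?_, ?_⟩
      · intro j hj
        have h1 := hy (Sum.inl j)
        have h2 := hy (Sum.inr j)
        simp only [hsy, hav, hbv, Sum.elim_inl, Sum.elim_inr, if_pos hj] at h1 h2
        simp only [Bool.false_eq_true, if_false] at h1 h2
        have hneg : (-aQ j) ⬝ᵥ y = -(aQ j ⬝ᵥ y) := by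
          simp [dotProduct, Finset.sum_neg_distrib]
        rw [hneg] at h2
        have heq : aQ j ⬝ᵥ y = (c j : ℚ) := le_antisymm h1 (by linarith)
        rw [hcast y j, heq]
        norm_cast
      · intro j hj
        have h1 := hy (Sum.inl j)
        simp only [hsy, hav, hbv, Sum.elim_inl, if_neg hj, if_true] at h1
        rw [hcast y j]
        exact_mod_cast h1
    obtain ⟨l, hl0, hlA, hlD⟩ := motzkin d av bv sy hinf
    set v : Fin n → ℚ := fun j =>
      -(l (Sum.inl j) - (if j ∈ τ then l (Sum.inr j) else 0)) with hvdef
    have hvA : ∀ i, ∑ j, v j * aQ j i = 0 := by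
      intro i
      have h0 := hlA i
      rw [Fintype.sum_sum_type] at h0
      have : ∑ j, v j * aQ j i =
          -(∑ j, l (Sum.inl j) * av (Sum.inl j) i + ∑ j, l (Sum.inr j) * av (Sum.inr j) i) := by
        rw [← Finset.sum_add_distrib, ← Finset.sum_neg_distrib]
        apply Finset.sum_congr rfl
        intro j _
        simp only [hvdef, hav, Sum.elim_inl, Sum.elim_inr]
        by_cases hj : j ∈ τ
        · rw [if_pos hj, if_pos hj]
          simp only [Pi.neg_apply]
          ring
        · rw [if_neg hj, if_neg hj]
          simp only [Pi.zero_apply]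
          ring
      rw [this, h0, neg_zero]
    have hvc : ∑ j, v j * (c j : ℚ) = -(∑ t, l t * bv t) := by
      rw [Fintype.sum_sum_type, ← Finset.sum_add_distrib, ← Finset.sum_neg_distrib]
      apply Finset.sum_congr rfl
      intro j _
      simp only [hvdef, hbv, Sum.elim_inl, Sum.elim_inr]
      by_cases hj : j ∈ τ
      · rw [if_pos hj, if_pos hj]; ring
      · rw [if_neg hj, if_neg hj]; ring
    have hvτ : ∀ j ∉ τ, v j ≤ 0 := by
      intro j hj
      simp only [hvdef, if_neg hj, sub_zero, neg_nonpos]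
      exact hl0 _
    -- clear denominators
    set D : ℕ := ∏ j, (v j).den with hD
    have hDpos : 0 < D := Finset.prod_pos (fun j _ => (v j).pos)
    have hint : ∀ j, ∃ m : ℤ, (m : ℚ) = (D : ℚ) * v j := by
      intro j
      obtain ⟨k, hk⟩ := Finset.dvd_prod_of_mem (fun j => (v j).den) (Finset.mem_univ j)
      refine ⟨(v j).num * (k : ℤ), ?_⟩
      have hden : ((v j).den : ℚ) ≠ 0 := by
        exact_mod_cast (v j).den_nz
      have hd : ((v j).num : ℚ) = v j * ((v j).den : ℚ) :=
        (div_eq_iff hden).mp (Rat.num_div_den (v j))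
      rw [hD, hk]
      push_cast
      rw [hd]
      ring
    choose w hw using hint
    have hwA : A.mulVec w = 0 := by
      funext i
      have hcast2 : ((A.mulVec w i : ℤ) : ℚ) = (D : ℚ) * ∑ j, v j * aQ j i := by
        simp only [Matrix.mulVec, dotProduct]
        push_cast
        rw [Finset.mul_sum]
        apply Finset.sum_congr rfl
        intro j _
        rw [hw j]
        simp only [haQ]
        ring
      rw [hvA i, mul_zero] at hcast2
      exact_mod_cast hcast2
    have hwc : ((∑ i, c i * w i : ℤ) : ℚ) = (D : ℚ) * ∑ j, v j * (c j : ℚ) := by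
      push_cast
      rw [Finset.mul_sum]
      apply Finset.sum_congr rfl
      intro j _
      rw [hw j]
      ring
    have hwτ : ∀ j ∉ τ, w j ≤ 0 := by
      intro j hj
      have : ((w j : ℤ) : ℚ) ≤ 0 := by
        rw [hw j]
        exact mul_nonpos_of_nonneg_of_nonpos (by positivity) (hvτ j hj)
      exact_mod_cast this
    -- unboundedness from a positive-cost kernel vector
    have unb : 0 < ∑ j, v j * (c j : ℚ) → False := by
      intro hpos
      have hwcpos : 0 < ∑ i, c i * w i := by
        have : (0 : ℚ) < ((∑ i, c i * w i : ℤ) : ℚ) := by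
          rw [hwc]
          exact mul_pos (by exact_mod_cast hDpos) hpos
        exact_mod_cast this
      obtain ⟨z, hz⟩ := (hB w).mp hwA
      obtain ⟨m, hm⟩ := hbdd
      have hcon : ∀ i ∉ τ, B.mulVec ((|m| + 1) • z) i ≤ (u i : ℤ) := by
        intro i hi
        rw [Matrix.mulVec_smul]
        have : (|m| + 1) • B.mulVec z i ≤ 0 := by
          rw [← hz, smul_eq_mul]
          exact mul_nonpos_of_nonneg_of_nonpos (by positivity) (hwτ i hi)
        calc ((|m| + 1) • B.mulVec z) i ≤ 0 := this
        _ ≤ (u i : ℤ) := Int.natCast_nonneg _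
      have hobj := hm ((|m| + 1) • z) hcon
      have hval : ∑ i, c i * B.mulVec ((|m| + 1) • z) i = (|m| + 1) * ∑ i, c i * w i := by
        rw [Matrix.mulVec_smul, Finset.mul_sum]
        apply Finset.sum_congr rfl
        intro i _
        rw [← hz]
        simp only [Pi.smul_apply, smul_eq_mul]
        ring
      rw [hval] at hobj
      have h1 : |m| + 1 ≤ (|m| + 1) * ∑ i, c i * w i :=
        le_mul_of_one_le_right (by positivity) hwcpos
      linarith [neg_le_abs m, abs_nonneg m]
    rcases hlD with hlt | ⟨hle, t, hst, hlt⟩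
    · exact unb (by rw [hvc]; linarith)
    · have hnn : 0 ≤ ∑ j, v j * (c j : ℚ) := by rw [hvc]; linarith
      rcases t with j0 | j0
      · have hj0 : j0 ∉ τ := by
          by_contra hj0
          simp only [hsy, Sum.elim_inl, if_pos hj0] at hst
          exact absurd hst (by simp)
        have hvj0 : v j0 < 0 := by
          simp only [hvdef, if_neg hj0, sub_zero, neg_lt_zero]
          exact hlt
        rcases lt_or_eq_of_le hnn with hpos | hzero
        · exact unb hpos
        · -- cost zero, nonzero kernel vector: contradicts genericity
          have hwc0 : ∑ i, c i * w i = 0 := by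
            have : ((∑ i, c i * w i : ℤ) : ℚ) = 0 := by rw [hwc, ← hzero, mul_zero]
            exact_mod_cast this
          have hwj0 : w j0 < 0 := by
            have : ((w j0 : ℤ) : ℚ) < 0 := by
              rw [hw j0]
              exact mul_neg_of_pos_of_neg (by exact_mod_cast hDpos) hvj0
            exact_mod_cast this
          have hxy : ∀ j, (((w j).toNat : ℤ)) - (((-w j).toNat : ℤ)) = w j := by
            intro j; omega
          have h1 : A.mulVec (fun i => (((w i).toNat : ℕ) : ℤ)) =
              A.mulVec (fun i => ((((-w i).toNat : ℕ)) : ℤ)) := by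
            funext i
            have h2 : A.mulVec w i = 0 := by rw [hwA]; rfl
            simp only [Matrix.mulVec, dotProduct] at h2 ⊢
            have h3 : ∑ j, A i j * ((w j).toNat : ℤ) - ∑ j, A i j * (((-w j).toNat : ℕ) : ℤ)
                = ∑ j, A i j * w j := by
              rw [← Finset.sum_sub_distrib]
              apply Finset.sum_congr rfl
              intro j _
              rw [← mul_sub, hxy j]
            rw [h2] at h3
            linarith [h3]
          have h2 : (∑ i, c i * (((w i).toNat : ℕ) : ℤ)) =
              ∑ i, c i * ((((-w i).toNat : ℕ)) : ℤ) := by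
            have h3 : ∑ i, c i * ((w i).toNat : ℤ) - ∑ i, c i * (((-w i).toNat : ℕ) : ℤ)
                = ∑ i, c i * w i := by
              rw [← Finset.sum_sub_distrib]
              apply Finset.sum_congr rfl
              intro i _
              rw [← mul_sub, hxy i]
            rw [hwc0] at h3
            linarith [h3]
          have := hgen (fun i => (w i).toNat) (fun i => (-w i).toNat) h1 h2
          have h4 := congrFun this j0
          omega
      · simp only [hsy, Sum.elim_inr] at hst
        exact absurd hst (by simp)
  · -- face implies boundedness
    rintro ⟨y, hyτ, hyτ'⟩
    refine ⟨⌊-(∑ j, if j ∈ τ then (0:ℝ) else ((c j : ℝ) - y ⬝ᵥ colA A j) * (u j : ℝ))⌋, ?_⟩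
    intro z hz
    set v : Fin n → ℤ := B.mulVec z with hv
    have hAv : A.mulVec v = 0 := (hB v).mpr ⟨z, rfl⟩
    have h1 : ∑ j, (y ⬝ᵥ colA A j) * (v j : ℝ) = 0 := by
      have hAv' : ∀ i : Fin d, ∑ j, (A i j : ℝ) * (v j : ℝ) = 0 := by
        intro i
        have : ((A.mulVec v i : ℤ) : ℝ) = 0 := by rw [hAv]; simp
        simpa [Matrix.mulVec, dotProduct] using this
      calc ∑ j, (y ⬝ᵥ colA A j) * (v j : ℝ)
          = ∑ j, ∑ i, y i * (A i j : ℝ) * (v j : ℝ) := by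
            apply Finset.sum_congr rfl
            intro j _
            rw [dotProduct, Finset.sum_mul]
            rfl
        _ = ∑ i, y i * (∑ j, (A i j : ℝ) * (v j : ℝ)) := by
            rw [Finset.sum_comm]
            apply Finset.sum_congr rfl
            intro i _
            rw [Finset.mul_sum]
            apply Finset.sum_congr rfl
            intro j _
            ring
        _ = 0 := by simp [hAv']
    have hkey : ((∑ i, c i * v i : ℤ) : ℝ) = ∑ j, ((c j : ℝ) - y ⬝ᵥ colA A j) * (v j : ℝ) := by
      have h2 : ∑ j, ((c j : ℝ) - y ⬝ᵥ colA A j) * (v j : ℝ)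
          = ∑ j, (c j : ℝ) * (v j : ℝ) - ∑ j, (y ⬝ᵥ colA A j) * (v j : ℝ) := by
        rw [← Finset.sum_sub_distrib]
        apply Finset.sum_congr rfl
        intros; ring
      rw [h2, h1, sub_zero]
      push_cast
      rfl
    have hbound : ∑ j, ((c j : ℝ) - y ⬝ᵥ colA A j) * (v j : ℝ)
        ≤ ∑ j, if j ∈ τ then (0:ℝ) else ((c j : ℝ) - y ⬝ᵥ colA A j) * (u j : ℝ) := by
      apply Finset.sum_le_sum
      intro j _
      by_cases hj : j ∈ τ
      · rw [if_pos hj]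
        have : (c j : ℝ) - y ⬝ᵥ colA A j = 0 := by rw [hyτ j hj]; ring
        rw [this, zero_mul]
      · rw [if_neg hj]
        apply mul_le_mul_of_nonneg_left
        · exact_mod_cast hz j hj
        · linarith [hyτ' j hj]
    have h3 : (↑(⌊-(∑ j, if j ∈ τ then (0:ℝ) else ((c j : ℝ) - y ⬝ᵥ colA A j) * (u j : ℝ))⌋) : ℝ)
        ≤ ((-(∑ i, c i * v i) : ℤ) : ℝ) := by
      push_cast
      have := Int.floor_le (-(∑ j, if j ∈ τ then (0:ℝ) else ((c j : ℝ) - y ⬝ᵥ colA A j) * (u j : ℝ)))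
      have h4 : ((∑ i, c i * v i : ℤ) : ℝ) ≤ ∑ j, if j ∈ τ then (0:ℝ) else ((c j : ℝ) - y ⬝ᵥ colA A j) * (u j : ℝ) :=
        hkey ▸ hbound
      push_cast at h4
      linarith
    exact_mod_cast h3
end

section
/- If τ is a face of the regular triangulation Δ_c, then the vector cB lies in the cone positively spanned by the rows of B^{τ̄}; equivalently, cB is a non-negative combination with strictly positive coefficients of the rows of B indexed by τ̄. -/
open Matrix

/-- If `τ` is a face of `Δ_c`, then `cB` is a combination with strictly positive
coefficients of the rows of `B` indexed by `τ̄` (the complement of `τ`). -/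
theorem stmt_11 (d n : ℕ) (A : Matrix (Fin d) (Fin n) ℤ) (c : Fin n → ℤ)
    (B : Matrix (Fin n) (Fin (n - d)) ℤ)
    (hAB : A * B = 0)
    (hB : ∀ v : Fin n → ℤ, A.mulVec v = 0 ↔ ∃ z : Fin (n - d) → ℤ, v = B.mulVec z)
    (τ : Finset (Fin n)) (hτ : IsDeltaFace A c τ) :
    ∃ p : Fin n → ℝ, (∀ i ∉ τ, 0 < p i) ∧ (∀ i ∈ τ, p i = 0) ∧
      ∀ j : Fin (n - d), (∑ i, (c i : ℝ) * (B i j : ℝ)) = ∑ i, p i * (B i j : ℝ) := by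
  obtain ⟨y, hy1, hy2⟩ := hτ
  refine ⟨fun i => (c i : ℝ) - y ⬝ᵥ colA A i, ?_, ?_, ?_⟩
  · intro i hi; have := hy2 i hi; dsimp only; linarith
  · intro i hi; have := hy1 i hi; dsimp only; linarith
  · intro j
    have key : ∑ i, (y ⬝ᵥ colA A i) * (B i j : ℝ) = 0 := by
      have : ∀ i, (y ⬝ᵥ colA A i) * (B i j : ℝ)
          = ∑ k, y k * ((A k i : ℝ) * (B i j : ℝ)) := by
        intro i
        simp [dotProduct, colA, Finset.sum_mul, mul_assoc]
      rw [Finset.sum_congr rfl fun i _ => this i, Finset.sum_comm]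
      have hz : ∀ k, (∑ i, (A k i : ℝ) * (B i j : ℝ)) = 0 := by
        intro k
        have := congrFun (congrFun hAB k) j
        simp only [Matrix.mul_apply, Matrix.zero_apply] at this
        have h2 : ((∑ i, A k i * B i j : ℤ) : ℝ) = 0 := by rw [this]; simp
        push_cast at h2
        exact h2
      simp [← Finset.mul_sum, hz]
    calc ∑ i, (c i : ℝ) * (B i j : ℝ)
        = ∑ i, (((c i : ℝ) - y ⬝ᵥ colA A i) * (B i j : ℝ)
            + (y ⬝ᵥ colA A i) * (B i j : ℝ)) := by
          apply Finset.sum_congr rfl; intro i _; ring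
      _ = ∑ i, ((c i : ℝ) - y ⬝ᵥ colA A i) * (B i j : ℝ) := by
          rw [Finset.sum_add_distrib, key, add_zero]
end

section
/- Let A ∈ ℤ^{d×n} of rank d with B ∈ ℤ^{n×(n−d)} a matrix whose columns are a basis of ker A ∩ ℤⁿ, and σ ⊆ {1,…,n} with |σ| = d and det(A_σ) ≠ 0. If the gcd of the maximal minors of A is 1 (equivalently ℤA = ℤ^d), then |det(B^{σ̄})| = |det(A_σ)|, i.e., the index of the lattice π_σ(ker A ∩ ℤⁿ) in ℤ^{n−d} equals |det(A_σ)|. -/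
open Matrix

/-- If the columns of `B` are a basis of `ker A ∩ ℤⁿ`, `σ` indexes `d` columns of `A`
with `det A_σ ≠ 0`, and the gcd of the maximal minors of `A` is `1` (i.e. `ℤA = ℤᵈ`),
then `|det B^{σ̄}| = |det A_σ|`: the index of `π_σ(ker A ∩ ℤⁿ)` in `ℤ^{n−d}` is
`|det A_σ|`. -/
theorem stmt_13 (d n : ℕ) (A : Matrix (Fin d) (Fin n) ℤ)
    (B : Matrix (Fin n) (Fin (n - d)) ℤ)
    (hrank : A.rank = d)
    (hBspan : ∀ v : Fin n → ℤ, A.mulVec v = 0 ↔ ∃ z : Fin (n - d) → ℤ, v = B.mulVec z)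
    (hBinj : Function.Injective (fun z : Fin (n - d) → ℤ => B.mulVec z))
    (σ : Finset (Fin n))
    (eσ : Fin d ≃ {j : Fin n // j ∈ σ})
    (eσ' : Fin (n - d) ≃ {j : Fin n // j ∉ σ})
    (hdet : (A.submatrix id (fun i => (eσ i : Fin n))).det ≠ 0)
    (hgcd : ∀ w : Fin d → ℤ, ∃ v : Fin n → ℤ, A.mulVec v = w) :
    (B.submatrix (fun i => ((eσ' i : Fin n))) id).det.natAbs =
      (A.submatrix id (fun i => (eσ i : Fin n))).det.natAbs := by
  classical
  -- an equivalence  Fin d ⊕ Fin (n-d) ≃ Fin n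
  set e : (Fin d ⊕ Fin (n - d)) ≃ Fin n :=
    (Equiv.sumCongr eσ eσ').trans (Equiv.sumCompl (· ∈ σ)) with he
  have he_inl : ∀ i, e (Sum.inl i) = (eσ i : Fin n) := fun i => rfl
  have he_inr : ∀ k, e (Sum.inr k) = (eσ' k : Fin n) := fun k => rfl
  -- right inverse V of A
  obtain ⟨V, hV⟩ : ∃ V : Matrix (Fin n) (Fin d) ℤ, A * V = 1 := by
    choose v hv using hgcd
    refine ⟨Matrix.of (fun j i => v (Pi.single i 1) j), ?_⟩
    ext i i'
    have := congrFun (hv (Pi.single i' 1)) i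
    simpa [Matrix.mul_apply, Matrix.mulVec, dotProduct, Matrix.one_apply,
      Pi.single_apply] using this
  -- A * B = 0
  have hAB : A * B = 0 := by
    ext i k
    have h := (hBspan (B.mulVec (Pi.single k 1))).mpr ⟨_, rfl⟩
    have h2 : (A * B).mulVec (Pi.single k 1) = 0 := by
      rw [← Matrix.mulVec_mulVec]; exact h
    have := congrFun h2 i
    simpa [Matrix.mulVec_single] using this
  -- projection matrix P
  set P : Matrix (Fin (n - d)) (Fin n) ℤ :=
    Matrix.of (fun k j => if ((eσ' k : Fin n) = j) then 1 else 0) with hP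
  have hPB : P * B = B.submatrix (fun i => ((eσ' i : Fin n))) id := by
    ext k k'
    simp [Matrix.mul_apply, hP, ite_mul]
  -- the matrices
  set A' : Matrix (Fin d ⊕ Fin (n - d)) (Fin n) ℤ := Matrix.fromRows A P with hA'
  set M : Matrix (Fin n) (Fin d ⊕ Fin (n - d)) ℤ := Matrix.fromCols V B with hM
  have hprod : A' * M = Matrix.fromBlocks 1 0 (P * V) (P * B) := by
    rw [hA', hM, Matrix.fromRows_mul_fromCols, hV, hAB]
  -- A' reindexed is block triangular
  have hA'e : A'.submatrix id e =
      Matrix.fromBlocks (A.submatrix id (fun i => (eσ i : Fin n)))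
        (A.submatrix id (fun k => (eσ' k : Fin n))) 0 1 := by
    ext a b
    cases a with
    | inl i =>
      cases b with
      | inl i' => simp [hA', he_inl]
      | inr k' => simp [hA', he_inr]
    | inr k =>
      cases b with
      | inl i' =>
        have : (eσ' k : Fin n) ≠ (eσ i' : Fin n) := by
          intro h
          exact (eσ' k).2 (h ▸ (eσ i').2)
        simp [hA', hP, he_inl, this]
      | inr k' =>
        have : ((eσ' k : Fin n) = (eσ' k' : Fin n)) ↔ k = k' := by
          constructor
          · intro h; exact eσ'.injective (Subtype.ext h)
          · rintro rfl; rfl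
        simp [hA', hP, he_inr, this, Matrix.one_apply]
  -- unimodularity of M
  have hx : ∀ j : Fin n, A.mulVec (Pi.single j 1 - V.mulVec (A.mulVec (Pi.single j 1))) = 0 := by
    intro j
    rw [Matrix.mulVec_sub, Matrix.mulVec_mulVec, hV, Matrix.one_mulVec, sub_self]
  choose z hz using fun j => (hBspan _).mp (hx j)
  set W : Matrix (Fin d ⊕ Fin (n - d)) (Fin n) ℤ :=
    Matrix.of (fun b j => Sum.rec (fun i => A.mulVec (Pi.single j 1) i) (fun k => z j k) b) with hW
  have hMW : M * W = 1 := by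
    ext a j
    have hzj : B.mulVec (z j) = Pi.single j 1 - V.mulVec (A.mulVec (Pi.single j 1)) :=
      (hz j).symm
    have : (M * W) a j =
        V.mulVec (A.mulVec (Pi.single j 1)) a + B.mulVec (z j) a := by
      simp [Matrix.mul_apply, Fintype.sum_sum_type, hM, hW, Matrix.mulVec, dotProduct]
    rw [this, hzj]
    simp [Matrix.one_apply, Pi.single_apply, eq_comm]
  -- determinant computations
  have key : (M.submatrix e id * W.submatrix id e) = 1 := by
    have h := Matrix.submatrix_mul_equiv M W (⇑e) (Equiv.refl _) (⇑e)
    simp only [Equiv.coe_refl] at h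
    rw [h, hMW, Matrix.submatrix_one_equiv]
  have hdetM : ((M.submatrix e id).det).natAbs = 1 := by
    have := congrArg Matrix.det key
    rw [Matrix.det_mul, Matrix.det_one] at this
    have hu : IsUnit (M.submatrix e id).det := IsUnit.of_mul_eq_one _ this
    rcases Int.isUnit_iff.mp hu with h | h <;> simp [h]
  have hmain : (A'.submatrix id e).det * (M.submatrix e id).det =
      (B.submatrix (fun i => ((eσ' i : Fin n))) id).det := by
    rw [← Matrix.det_mul, Matrix.submatrix_mul_equiv, Matrix.submatrix_id_id, hprod,
      Matrix.det_fromBlocks_zero₁₂, Matrix.det_one, one_mul, hPB]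
  have hA'det : (A'.submatrix id e).det = (A.submatrix id (fun i => (eσ i : Fin n))).det := by
    rw [hA'e, Matrix.det_fromBlocks_zero₂₁, Matrix.det_one, mul_one]
  have := congrArg Int.natAbs hmain
  rw [Int.natAbs_mul, hA'det, hdetM, mul_one] at this
  exact this.symm
end

section
/- With A, c as in the standing assumptions and ℤA = ℤ^d: if σ is a maximal face of Δ_c, then the number of standard pairs of O_c indexed by σ (the multiplicity of σ) equals |det(A_σ)|. -/
open Matrix

/-- `u` is an optimal solution of the program `IP_{A,c}(Au)`, i.e. `u ∈ O_c`. -/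
def InOc {d n : ℕ} (A : Matrix (Fin d) (Fin n) ℤ) (c : Fin n → ℤ) (u : Fin n → ℕ) : Prop :=
  ∀ v : Fin n → ℕ, A.mulVec (fun i => (v i : ℤ)) = A.mulVec (fun i => (u i : ℤ)) →
    (∑ i, c i * (u i : ℤ)) ≤ ∑ i, c i * (v i : ℤ)

/-- The affine semigroup `S(u,τ) = u + ℕ(eᵢ : i ∈ τ)`. -/
def stdSemigroup {n : ℕ} (u : Fin n → ℕ) (τ : Finset (Fin n)) : Set (Fin n → ℕ) :=
  {x | ∃ w : Fin n → ℕ, (∀ i ∉ τ, w i = 0) ∧ x = u + w}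

/-- `(u,τ)` is an admissible pair of `O_c`. -/
def AdmissiblePair {d n : ℕ} (A : Matrix (Fin d) (Fin n) ℤ) (c : Fin n → ℤ)
    (u : Fin n → ℕ) (τ : Finset (Fin n)) : Prop :=
  IsDeltaFace A c τ ∧ (∀ i ∈ τ, u i = 0) ∧ ∀ x ∈ stdSemigroup u τ, InOc A c x

/-- `(u,τ)` is a standard pair of `O_c`. -/
def StandardPair {d n : ℕ} (A : Matrix (Fin d) (Fin n) ℤ) (c : Fin n → ℤ)
    (u : Fin n → ℕ) (τ : Finset (Fin n)) : Prop :=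
  AdmissiblePair A c u τ ∧
    ∀ (v : Fin n → ℕ) (τ' : Finset (Fin n)), AdmissiblePair A c v τ' →
      stdSemigroup u τ ⊆ stdSemigroup v τ' → stdSemigroup u τ = stdSemigroup v τ'


section AuxSTD

lemma mulVecLin_injective_of_det_ne_zero {d : ℕ} (B : Matrix (Fin d) (Fin d) ℤ)
    (hB : B.det ≠ 0) : Function.Injective B.mulVecLin := by
  rw [← LinearMap.ker_eq_bot]
  ext v
  simp only [LinearMap.mem_ker, Submodule.mem_bot, Matrix.mulVecLin_apply]
  constructor
  · intro h
    have h2 : B.adjugate *ᵥ (B *ᵥ v) = 0 := by rw [h, Matrix.mulVec_zero]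
    rw [Matrix.mulVec_mulVec, Matrix.adjugate_mul, Matrix.smul_mulVec,
      Matrix.one_mulVec] at h2
    funext i
    have := congrFun h2 i
    simp only [Pi.smul_apply, smul_eq_mul, Pi.zero_apply] at this
    rcases mul_eq_zero.mp this with h | h
    · exact absurd h hB
    · exact h
  · rintro rfl; exact Matrix.mulVec_zero B

lemma card_quot_det {d : ℕ} (B : Matrix (Fin d) (Fin d) ℤ) (hB : B.det ≠ 0) :
    Nat.card ((Fin d → ℤ) ⧸ LinearMap.range B.mulVecLin) = B.det.natAbs := by
  classical
  set N : Submodule ℤ (Fin d → ℤ) := LinearMap.range B.mulVecLin with hN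
  have hinj := mulVecLin_injective_of_det_ne_zero B hB
  let eB : (Fin d → ℤ) ≃ₗ[ℤ] N := LinearEquiv.ofInjective B.mulVecLin hinj
  obtain ⟨m, snf⟩ := N.smithNormalForm (Pi.basisFun ℤ (Fin d))
  have hmd : d = m := by
    have e : (Fin m → ℤ) ≃ₗ[ℤ] (Fin d → ℤ) := snf.bN.equivFun.symm.trans eB.symm
    have := e.finrank_eq
    simpa [Module.finrank_pi] using this.symm
  subst hmd
  have hcard : Nat.card ((Fin d → ℤ) ⧸ N) = N.toAddSubgroup.index :=
    (Submodule.cardQuot_apply N).symm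
  have hindex : N.toAddSubgroup.index = ∏ i : Fin d, (snf.a i).natAbs := by
    rw [snf.toAddSubgroup_index_eq_pow_mul_prod]
    simp [Ideal.span_singleton_toAddSubgroup_eq_zmultiples, Int.index_zmultiples]
  let ef : Fin d ≃ Fin d := snf.f.equivOfFiniteSelfEmbedding
  have hef : ∀ i, ef i = snf.f i := fun i => rfl
  let bNd : Module.Basis (Fin d) ℤ N := snf.bN.reindex ef
  let e2 : (Fin d → ℤ) ≃ₗ[ℤ] N := snf.bM.equiv bNd (Equiv.refl _)
  have hdet2 : LinearMap.det ((N.subtype.restrictScalars ℤ) ∘ₗ (e2 : (Fin d → ℤ) →ₗ[ℤ] N))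
      = ∏ j : Fin d, snf.a (ef.symm j) := by
    rw [← LinearMap.det_toMatrix snf.bM]
    have : (LinearMap.toMatrix snf.bM snf.bM)
        ((N.subtype.restrictScalars ℤ) ∘ₗ (e2 : (Fin d → ℤ) →ₗ[ℤ] N))
        = Matrix.diagonal (fun j => snf.a (ef.symm j)) := by
      ext i j
      rw [LinearMap.toMatrix_apply]
      have h1 : ((N.subtype.restrictScalars ℤ) ∘ₗ (e2 : (Fin d → ℤ) →ₗ[ℤ] N)) (snf.bM j)
          = (bNd j : Fin d → ℤ) := by
        simp [e2, Module.Basis.equiv_apply]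
      rw [h1]
      have h2 : (bNd j : Fin d → ℤ) = snf.a (ef.symm j) • (snf.bM (ef (ef.symm j))) := by
        simp only [bNd, Module.Basis.reindex_apply]
        rw [snf.snf, hef]
      rw [h2, Equiv.apply_symm_apply, _root_.map_smul, Module.Basis.repr_self]
      by_cases h : i = j
      · subst h; simp
      · simp [Finsupp.single_apply, Ne.symm h, Matrix.diagonal_apply_ne _ h]
    rw [this, Matrix.det_diagonal]
  have hdet1 : LinearMap.det ((N.subtype.restrictScalars ℤ) ∘ₗ (eB : (Fin d → ℤ) →ₗ[ℤ] N))
      = B.det := by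
    have : (N.subtype.restrictScalars ℤ) ∘ₗ (eB : (Fin d → ℤ) →ₗ[ℤ] N) = B.mulVecLin := by
      exact LinearMap.ext fun x => rfl
    rw [this]
    have h3 : B.mulVecLin = Matrix.toLin' B := by
      ext x; simp [Matrix.toLin'_apply]
    rw [h3, LinearMap.det_toLin']
  have hassoc := LinearMap.associated_det_comp_equiv (N.subtype.restrictScalars ℤ) eB e2
  rw [hdet1, hdet2] at hassoc
  have : B.det.natAbs = (∏ j : Fin d, snf.a (ef.symm j)).natAbs :=
    Int.natAbs_eq_iff_associated.mpr hassoc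
  rw [hcard, hindex, this]
  rw [show (∏ j : Fin d, snf.a (ef.symm j)) = ∏ i : Fin d, snf.a i from
    Fintype.prod_equiv ef.symm _ _ (fun j => rfl)]
  exact (map_prod Int.natAbsHom snf.a Finset.univ).symm

/-- lift a `Fin d` indexed integer vector to `Fin n`, supported on `σ`. -/
def liftInt {d n : ℕ} (σ : Finset (Fin n)) (eσ : Fin d ≃ {j : Fin n // j ∈ σ})
    (t : Fin d → ℤ) : Fin n → ℤ :=
  fun j => if h : j ∈ σ then t (eσ.symm ⟨j, h⟩) else 0

lemma liftInt_def {d n : ℕ} (σ : Finset (Fin n)) (eσ : Fin d ≃ {j : Fin n // j ∈ σ})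
    (t : Fin d → ℤ) :
    liftInt σ eσ t = fun j => if h : j ∈ σ then t (eσ.symm ⟨j, h⟩) else 0 := rfl

lemma mulVec_liftInt {d n : ℕ} (A : Matrix (Fin d) (Fin n) ℤ) (σ : Finset (Fin n))
    (eσ : Fin d ≃ {j : Fin n // j ∈ σ}) (t : Fin d → ℤ) :
    A.mulVec (liftInt σ eσ t) = (A.submatrix id (fun i => (eσ i : Fin n))).mulVec t := by
  funext i
  simp only [Matrix.mulVec, dotProduct, Matrix.submatrix_apply, id_eq]
  rw [← Finset.sum_subset (Finset.subset_univ σ) (by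
    intro j _ hj
    simp [liftInt, hj])]
  rw [← Finset.sum_attach σ (fun j => A i j * liftInt σ eσ t j)]
  rw [← Finset.univ_eq_attach]
  rw [← Equiv.sum_comp eσ (fun s => A i (s : Fin n) * liftInt σ eσ t (s : Fin n))]
  refine Finset.sum_congr rfl fun k _ => ?_
  have h : ((eσ k : Fin n)) ∈ σ := (eσ k).2
  simp [liftInt, h]

/-- cost of a vector supported on a face equals `y ⬝ (A x)`. -/
lemma cost_face {d n : ℕ} (A : Matrix (Fin d) (Fin n) ℤ) (c : Fin n → ℤ)
    (τ : Finset (Fin n)) (y : Fin d → ℝ)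
    (hy : ∀ j ∈ τ, y ⬝ᵥ colA A j = (c j : ℝ))
    (x : Fin n → ℤ) (hx : ∀ j ∉ τ, x j = 0) :
    ((c ⬝ᵥ x : ℤ) : ℝ) = y ⬝ᵥ (fun i => ((A.mulVec x) i : ℝ)) := by
  have hrhs : y ⬝ᵥ (fun i => ((A.mulVec x) i : ℝ))
      = ∑ j, (∑ i, y i * (A i j : ℝ)) * (x j : ℝ) := by
    simp only [dotProduct, Matrix.mulVec]
    push_cast
    simp_rw [Finset.mul_sum]
    rw [Finset.sum_comm]
    refine Finset.sum_congr rfl fun j _ => ?_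
    rw [Finset.sum_mul]
    exact Finset.sum_congr rfl fun i _ => by ring
  rw [hrhs]
  push_cast [dotProduct]
  refine Finset.sum_congr rfl fun j _ => ?_
  by_cases hj : j ∈ τ
  · have := hy j hj
    simp only [dotProduct, colA] at this
    rw [this]
  · rw [hx j hj]
    push_cast
    ring

section
variable {d n : ℕ} (A : Matrix (Fin d) (Fin n) ℤ) (c : Fin n → ℤ)
  (σ : Finset (Fin n)) (eσ : Fin d ≃ {j : Fin n // j ∈ σ})

lemma face_kernel_zero (τ : Finset (Fin n)) (y : Fin d → ℝ)
    (hy : ∀ j ∈ τ, y ⬝ᵥ colA A j = (c j : ℝ))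
    (hgen : ∀ x y : Fin n → ℕ,
      A.mulVec (fun i => (x i : ℤ)) = A.mulVec (fun i => (y i : ℤ)) →
      (∑ i, c i * (x i : ℤ)) = (∑ i, c i * (y i : ℤ)) → x = y)
    (z : Fin n → ℤ) (hzsupp : ∀ j ∉ τ, z j = 0) (hz : A.mulVec z = 0) : z = 0 := by
  classical
  set x : Fin n → ℕ := fun j => (z j).toNat with hxdef
  set zz : Fin n → ℕ := fun j => (-z j).toNat with hzzdef
  have hsub : ∀ j, ((x j : ℤ)) - (zz j : ℤ) = z j := by
    intro j; simp only [hxdef, hzzdef]; omega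
  have hsubf : (fun j => (x j : ℤ)) - (fun j => (zz j : ℤ)) = z := by
    funext j; exact hsub j
  have hAeq : A.mulVec (fun i => (x i : ℤ)) = A.mulVec (fun i => (zz i : ℤ)) := by
    have h2 : A.mulVec (fun i => (x i : ℤ)) - A.mulVec (fun i => (zz i : ℤ)) = 0 := by
      rw [← Matrix.mulVec_sub, hsubf, hz]
    rwa [sub_eq_zero] at h2
  have hxsupp : ∀ j ∉ τ, ((x j : ℤ)) = 0 := by
    intro j hj; simp only [hxdef, hzsupp j hj]; rfl
  have hzzsupp : ∀ j ∉ τ, ((zz j : ℤ)) = 0 := by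
    intro j hj; simp only [hzzdef, hzsupp j hj]; rfl
  have hc1 := cost_face A c τ y hy (fun j => (x j : ℤ)) (by
    intro j hj; exact hxsupp j hj)
  have hc2 := cost_face A c τ y hy (fun j => (zz j : ℤ)) (by
    intro j hj; exact hzzsupp j hj)
  have hceq : (c ⬝ᵥ (fun j => (x j : ℤ))) = c ⬝ᵥ (fun j => (zz j : ℤ)) := by
    have : ((c ⬝ᵥ (fun j => (x j : ℤ)) : ℤ) : ℝ) = ((c ⬝ᵥ (fun j => (zz j : ℤ)) : ℤ) : ℝ) := by
      rw [hc1, hc2, hAeq]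
    exact_mod_cast this
  have hxz : x = zz := hgen x zz hAeq hceq
  funext j
  have := hsub j
  rw [hxz] at this
  simpa using this.symm

lemma detB_ne_zero (hσ : IsDeltaFace A c σ)
    (hgen : ∀ x y : Fin n → ℕ,
      A.mulVec (fun i => (x i : ℤ)) = A.mulVec (fun i => (y i : ℤ)) →
      (∑ i, c i * (x i : ℤ)) = (∑ i, c i * (y i : ℤ)) → x = y) :
    (A.submatrix id (fun i => (eσ i : Fin n))).det ≠ 0 := by
  classical
  intro hdet
  obtain ⟨v, hv0, hv⟩ := Matrix.exists_mulVec_eq_zero_iff.mpr hdet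
  obtain ⟨y, hy, -⟩ := hσ
  have hz : A.mulVec (liftInt σ eσ v) = 0 := by rw [mulVec_liftInt, hv]
  have hzsupp : ∀ j ∉ σ, liftInt σ eσ v j = 0 := by
    intro j hj; rw [liftInt_def]; exact dif_neg hj
  have h0 := face_kernel_zero A c σ y hy hgen _ hzsupp hz
  apply hv0
  funext k
  have := congrFun h0 ((eσ k : Fin n))
  rw [liftInt_def] at this
  simpa using this

lemma exists_q (hσ : IsDeltaFace A c σ)
    (hdet : (A.submatrix id (fun i => (eσ i : Fin n))).det ≠ 0) :
    ∃ (D : ℤ) (q : Fin n → ℤ), 0 < D ∧ (∀ j ∈ σ, q j = 0) ∧ (∀ j ∉ σ, 0 < q j) ∧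
      (∀ x z : Fin n → ℤ, A.mulVec x = A.mulVec z →
        q ⬝ᵥ x - q ⬝ᵥ z = D * (c ⬝ᵥ x - c ⬝ᵥ z)) := by
  classical
  obtain ⟨y, hy, hylt⟩ := hσ
  set B := A.submatrix id (fun i => (eσ i : Fin n)) with hB
  set Bℝ : Matrix (Fin d) (Fin d) ℝ := B.map (Int.cast : ℤ → ℝ) with hBR
  set cσ : Fin d → ℤ := fun i => c (eσ i) with hcσ
  have hyB : y ᵥ* Bℝ = fun i => (cσ i : ℝ) := by
    funext i
    have := hy (eσ i) (eσ i).2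
    simp only [Matrix.vecMul, dotProduct, colA] at this ⊢
    simpa [hBR, hB] using this
  set Y0 : Fin d → ℤ := cσ ᵥ* B.adjugate with hY0
  have hY0cast : (fun i => ((Y0 i : ℤ) : ℝ)) = (B.det : ℝ) • y := by
    have h1 : (fun i => ((Y0 i : ℤ) : ℝ)) = (fun i => (cσ i : ℝ)) ᵥ* (B.adjugate.map
        (Int.cast : ℤ → ℝ)) := by
      funext i
      simp only [hY0, Matrix.vecMul, dotProduct, Matrix.map_apply]
      push_cast
      rfl
    have h3 : B.adjugate.map (Int.cast : ℤ → ℝ) = Bℝ.adjugate := by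
      rw [hBR]
      have h5 := RingHom.map_adjugate (Int.castRingHom ℝ) B
      rw [RingHom.mapMatrix_apply, RingHom.mapMatrix_apply, Int.coe_castRingHom] at h5
      exact h5
    rw [h1, h3, ← hyB, Matrix.vecMul_vecMul, Matrix.mul_adjugate]
    have hdet2 : Bℝ.det = (B.det : ℝ) := by
      rw [hBR]
      exact (RingHom.map_det (Int.castRingHom ℝ) B).symm
    rw [hdet2]
    funext i
    simp only [Matrix.vecMul, dotProduct, Matrix.smul_apply, Matrix.one_apply,
      smul_eq_mul, mul_ite, mul_one, mul_zero, Pi.smul_apply]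
    rw [Finset.sum_ite_eq' Finset.univ i (fun x => y x * (B.det : ℝ))]
    simp [mul_comm]
  set s : ℤ := if 0 < B.det then 1 else -1 with hs
  set D : ℤ := s * B.det with hD
  have hDpos : 0 < D := by
    rcases lt_or_gt_of_ne hdet with h | h
    · have : s = -1 := by rw [hs, if_neg (by omega)]
      rw [hD, this]; omega
    · have : s = 1 := by rw [hs, if_pos h]
      rw [hD, this]; omega
  set Y : Fin d → ℤ := s • Y0 with hY
  set q : Fin n → ℤ := fun j => D * c j - (Y ᵥ* A) j with hq
  have hYcast : ∀ i, ((Y i : ℤ) : ℝ) = (D : ℝ) * y i := by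
    intro i
    have := congrFun hY0cast i
    simp only [Pi.smul_apply, smul_eq_mul] at this
    have hsi : ((s : ℤ) : ℝ) * ((Y0 i : ℤ) : ℝ) = ((Y i : ℤ) : ℝ) := by
      simp only [hY, Pi.smul_apply, smul_eq_mul]
      push_cast
      ring
    rw [← hsi, this, hD]; push_cast; ring
  have hqcast : ∀ j, ((q j : ℤ) : ℝ) = (D : ℝ) * ((c j : ℝ) - y ⬝ᵥ colA A j) := by
    intro j
    simp only [hq, Matrix.vecMul, dotProduct, colA]
    push_cast
    have h4 : ∑ x : Fin d, ((Y x : ℤ) : ℝ) * ((A x j : ℤ) : ℝ)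
        = (D : ℝ) * ∑ x : Fin d, y x * ((A x j : ℤ) : ℝ) := by
      rw [Finset.mul_sum]
      exact Finset.sum_congr rfl fun i _ => by rw [hYcast i]; ring
    rw [h4]; ring
  refine ⟨D, q, hDpos, ?_, ?_, ?_⟩
  · intro j hj
    have h0 : ((q j : ℤ) : ℝ) = 0 := by rw [hqcast j, hy j hj]; ring
    exact_mod_cast h0
  · intro j hj
    have h0 : (0 : ℝ) < ((q j : ℤ) : ℝ) := by
      rw [hqcast j]
      have := hylt j hj
      have hD' : (0 : ℝ) < (D : ℝ) := by exact_mod_cast hDpos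
      nlinarith
    exact_mod_cast h0
  · intro x z hxz
    have hid : ∀ w : Fin n → ℤ, q ⬝ᵥ w = D * (c ⬝ᵥ w) - Y ⬝ᵥ (A.mulVec w) := by
      intro w
      rw [Matrix.dotProduct_mulVec]
      simp only [hq, dotProduct, Finset.mul_sum]
      rw [← Finset.sum_sub_distrib]
      refine Finset.sum_congr rfl fun j _ => by ring
    rw [hid x, hid z, hxz]
    ring

end
end AuxSTD

/-- If `σ` is a maximal face of the regular triangulation `Δ_c` and `ℤA = ℤᵈ`, then the
multiplicity of `σ` (the number of standard pairs of `O_c` indexed by `σ`) equals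
`|det A_σ|`. -/
theorem stmt_14 (d n : ℕ) (A : Matrix (Fin d) (Fin n) ℤ) (c : Fin n → ℤ)
    (hrank : A.rank = d)
    (hker : ∀ v : Fin n → ℝ,
      (A.map (Int.cast : ℤ → ℝ)).mulVec v = 0 → (∀ i, 0 ≤ v i) → v = 0)
    (hgen : ∀ x y : Fin n → ℕ,
      A.mulVec (fun i => (x i : ℤ)) = A.mulVec (fun i => (y i : ℤ)) →
      (∑ i, c i * (x i : ℤ)) = (∑ i, c i * (y i : ℤ)) → x = y)
    (hZA : ∀ w : Fin d → ℤ, ∃ v : Fin n → ℤ, A.mulVec v = w)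
    (σ : Finset (Fin n)) (hσ : IsDeltaFace A c σ)
    (eσ : Fin d ≃ {j : Fin n // j ∈ σ}) :
    Nat.card {u : Fin n → ℕ // StandardPair A c u σ} =
      (A.submatrix id (fun i => (eσ i : Fin n))).det.natAbs := by
  classical
  set B := A.submatrix id (fun i => (eσ i : Fin n)) with hBdef
  have hdet : B.det ≠ 0 := detB_ne_zero A c σ eσ hσ hgen
  obtain ⟨D, q, hD, hq0, hqpos, hqc⟩ := exists_q A c σ eσ hσ hdet
  set N : Submodule ℤ (Fin d → ℤ) := LinearMap.range B.mulVecLin with hNdef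
  have hmemN : ∀ t : Fin d → ℤ, B.mulVec t ∈ N := fun t => ⟨t, rfl⟩
  have hdiffmem : ∀ x z : Fin n → ℤ, (∀ j ∉ σ, x j = z j) →
      A.mulVec x - A.mulVec z ∈ N := by
    intro x z hxz
    have h1 : x - z = liftInt σ eσ (fun k => x (eσ k) - z (eσ k)) := by
      funext j
      by_cases h : j ∈ σ
      · simp only [liftInt_def, dif_pos h, Equiv.apply_symm_apply, Pi.sub_apply]
      · simp only [liftInt_def, dif_neg h, Pi.sub_apply, hxz j h, sub_self]
    rw [← Matrix.mulVec_sub, h1, mulVec_liftInt]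
    exact hmemN _
  have hdetmem : ∀ x : Fin d → ℤ, B.det • x ∈ N := by
    intro x
    refine ⟨B.adjugate.mulVec x, ?_⟩
    rw [Matrix.mulVecLin_apply, Matrix.mulVec_mulVec, Matrix.mul_adjugate,
      Matrix.smul_mulVec, Matrix.one_mulVec]
  have hqnn : ∀ v : Fin n → ℕ, 0 ≤ q ⬝ᵥ (fun i => (v i : ℤ)) := by
    intro v
    refine Finset.sum_nonneg fun j _ => ?_
    by_cases h : j ∈ σ
    · rw [hq0 j h, zero_mul]
    · exact mul_nonneg (le_of_lt (hqpos j h)) (Int.ofNat_nonneg _)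
  have hqσ : ∀ w : Fin n → ℤ, (∀ j, j ∉ σ → w j = 0) → q ⬝ᵥ w = 0 := by
    intro w hw
    refine Finset.sum_eq_zero fun j _ => ?_
    by_cases h : j ∈ σ
    · rw [hq0 j h, zero_mul]
    · rw [hw j h, mul_zero]
  have hopt : ∀ x : Fin n → ℕ,
      (∀ z : Fin n → ℕ, A.mulVec (fun i => (z i : ℤ)) = A.mulVec (fun i => (x i : ℤ)) →
        q ⬝ᵥ (fun i => (x i : ℤ)) ≤ q ⬝ᵥ (fun i => (z i : ℤ))) → InOc A c x := by
    intro x hx z hz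
    have h1 := hx z hz
    have h2 := hqc (fun i => (z i : ℤ)) (fun i => (x i : ℤ)) hz
    show (∑ i, c i * (x i : ℤ)) ≤ ∑ i, c i * (z i : ℤ)
    have h3 : (∑ i, c i * (x i : ℤ)) = c ⬝ᵥ (fun i => (x i : ℤ)) := rfl
    have h4 : (∑ i, c i * (z i : ℤ)) = c ⬝ᵥ (fun i => (z i : ℤ)) := rfl
    rw [h3, h4]
    by_contra hlt
    push_neg at hlt
    have h5 : q ⬝ᵥ (fun i => (z i : ℤ)) - q ⬝ᵥ (fun i => (x i : ℤ)) < 0 := by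
      rw [h2]
      exact mul_neg_of_pos_of_neg hD (by linarith)
    linarith
  -- every admissible pair indexed by σ is standard
  have hstd : ∀ u : Fin n → ℕ, AdmissiblePair A c u σ → StandardPair A c u σ := by
    intro u hadm
    refine ⟨hadm, ?_⟩
    intro v τ' hadm' hsub
    have hστ : ∀ i ∈ σ, i ∈ τ' := by
      intro i hi
      by_contra hit
      set w : Fin n → ℕ := fun j => if j = i then v i + 1 else 0 with hwdef
      have hxmem : (u + w) ∈ stdSemigroup u σ := by
        refine ⟨w, ?_, rfl⟩
        intro j hj
        rw [hwdef]
        by_cases h : j = i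
        · subst h; exact absurd hi hj
        · simp [h]
      obtain ⟨w', hw', heq⟩ := hsub hxmem
      have h1 := congrFun heq i
      simp only [Pi.add_apply] at h1
      rw [hadm.2.1 i hi, hw' i hit] at h1
      simp [hwdef] at h1
    have hτσ : ∀ j ∈ τ', j ∈ σ := by
      intro j0 hj0
      by_contra hj0s
      obtain ⟨y', hy', -⟩ := hadm'.1
      set zcol : Fin d → ℤ := fun i => A i j0 with hzcol
      set zint : Fin n → ℤ :=
        B.det • Pi.single j0 1 - liftInt σ eσ (B.adjugate.mulVec zcol) with hzint
      have hAz : A.mulVec zint = 0 := by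
        rw [hzint, Matrix.mulVec_sub, Matrix.mulVec_smul, mulVec_liftInt,
          Matrix.mulVec_mulVec, Matrix.mul_adjugate, Matrix.smul_mulVec,
          Matrix.one_mulVec, Matrix.mulVec_single_one]
        have : A.col j0 = zcol := by funext i; rfl
        rw [this, sub_self]
      have hzsupp : ∀ j ∉ τ', zint j = 0 := by
        intro j hj
        have hjσ : j ∉ σ := fun h => hj (hστ j h)
        have hji : j ≠ j0 := by rintro rfl; exact hj hj0
        simp [hzint, liftInt_def, hjσ, Pi.single_apply, hji]
      have h0 := face_kernel_zero A c τ' y' hy' hgen zint hzsupp hAz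
      have hval : zint j0 = B.det := by
        simp [hzint, liftInt_def, hj0s, Pi.single_apply]
      rw [h0] at hval
      exact hdet (by simpa using hval.symm)
    have hτeq : τ' = σ := Finset.ext fun j => ⟨hτσ j, hστ j⟩
    subst hτeq
    have humem : u ∈ stdSemigroup u τ' := ⟨0, fun i _ => rfl, by funext j; simp⟩
    obtain ⟨w', hw', heq⟩ := hsub humem
    have huv : u = v := by
      funext j
      have h1 := congrFun heq j
      simp only [Pi.add_apply] at h1
      by_cases h : j ∈ τ'
      · rw [hadm.2.1 j h, hadm'.2.1 j h]
      · rw [hw' j h, add_zero] at h1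
        exact h1
    rw [huv]
  -- lifting natural vectors supported on σ
  set liftN : (Fin d → ℕ) → (Fin n → ℕ) :=
    fun t j => if h : j ∈ σ then t (eσ.symm ⟨j, h⟩) else 0 with hliftN
  have hcastlift : ∀ t : Fin d → ℕ,
      (fun i => ((liftN t) i : ℤ)) = liftInt σ eσ (fun k => (t k : ℤ)) := by
    intro t
    funext j
    by_cases h : j ∈ σ <;> simp [hliftN, liftInt_def, h]
  have hliftsupp : ∀ t : Fin d → ℕ, ∀ i ∉ σ, liftN t i = 0 := by
    intro t i hi; simp [hliftN, hi]
  have hcastadd : ∀ a b : Fin n → ℕ,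
      (fun i => (((a + b) i : ℕ) : ℤ)) = (fun i => (a i : ℤ)) + (fun i => (b i : ℤ)) := by
    intro a b; funext i; simp
  -- the bijection
  set φ : {u : Fin n → ℕ // StandardPair A c u σ} → ((Fin d → ℤ) ⧸ N) :=
    fun u => Submodule.Quotient.mk (A.mulVec (fun i => ((u.1 i : ℕ) : ℤ))) with hφ
  have hinj : Function.Injective φ := by
    rintro ⟨u, hu⟩ ⟨u', hu'⟩ h
    simp only [hφ] at h
    rw [Submodule.Quotient.eq] at h
    obtain ⟨w, hw⟩ := h
    rw [Matrix.mulVecLin_apply] at hw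
    set x : Fin n → ℕ := u + liftN (fun k => (-(w k)).toNat) with hxdef
    set x' : Fin n → ℕ := u' + liftN (fun k => (w k).toNat) with hx'def
    have hwsplit : (fun k => (((w k).toNat : ℤ))) - (fun k => (((-(w k)).toNat : ℤ))) = w := by
      funext k; simp only [Pi.sub_apply]; omega
    have hAx : A.mulVec (fun i => (x i : ℤ)) = A.mulVec (fun i => (x' i : ℤ)) := by
      rw [hxdef, hx'def, hcastadd, hcastadd, Matrix.mulVec_add, Matrix.mulVec_add,
        hcastlift (fun k => (-(w k)).toNat), hcastlift (fun k => (w k).toNat),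
        mulVec_liftInt, mulVec_liftInt]
      have h5 : B.mulVec (fun k => ((w k).toNat : ℤ))
          - B.mulVec (fun k => (((-(w k)).toNat : ℤ)))
          = A.mulVec (fun i => (u i : ℤ)) - A.mulVec (fun i => (u' i : ℤ)) := by
        rw [← Matrix.mulVec_sub, hwsplit]
        exact hw
      funext i
      have h6 := congrFun h5 i
      simp only [Pi.add_apply, Pi.sub_apply] at h6 ⊢
      linarith
    have hxmem : x ∈ stdSemigroup u σ :=
      ⟨liftN (fun k => (-(w k)).toNat), hliftsupp (fun k => (-(w k)).toNat), hxdef⟩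
    have hx'mem : x' ∈ stdSemigroup u' σ :=
      ⟨liftN (fun k => (w k).toNat), hliftsupp (fun k => (w k).toNat), hx'def⟩
    have hxopt := hu.1.2.2 x hxmem
    have hx'opt := hu'.1.2.2 x' hx'mem
    have hle1 := hxopt x' hAx.symm
    have hle2 := hx'opt x hAx
    have hcosteq : (∑ i, c i * (x i : ℤ)) = ∑ i, c i * (x' i : ℤ) := le_antisymm hle1 hle2
    have hxx' : x = x' := hgen x x' hAx hcosteq
    refine Subtype.ext (funext fun j => ?_)
    show u j = u' j
    by_cases h : j ∈ σ
    · rw [hu.1.2.1 j h, hu'.1.2.1 j h]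
    · have h7 := congrFun hxx' j
      simp only [hxdef, hx'def, Pi.add_apply] at h7
      rw [hliftsupp (fun k => (-(w k)).toNat) j h, hliftsupp (fun k => (w k).toNat) j h] at h7
      simpa using h7
  have hsurj : Function.Surjective φ := by
    intro g
    obtain ⟨w, rfl⟩ := Submodule.Quotient.mk_surjective N g
    obtain ⟨v', hv'⟩ := hZA w
    set E : ℤ := B.det * B.det with hE
    have hE1 : 0 < E := mul_self_pos.mpr hdet
    set v0 : Fin n → ℕ :=
      fun j => if j ∈ σ then 0 else (v' j + E * (v' j).natAbs).toNat with hv0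
    have hv0σ : ∀ i ∈ σ, v0 i = 0 := fun i hi => by simp [hv0, hi]
    have hv0cast : ∀ j, j ∉ σ → ((v0 j : ℤ)) = v' j + E * (v' j).natAbs := by
      intro j hj
      simp only [hv0, if_neg hj]
      have h6 : ((v' j).natAbs : ℤ) ≤ E * (v' j).natAbs :=
        le_mul_of_one_le_left (Int.natCast_nonneg _) (by omega)
      have h7 : 0 ≤ v' j + E * (v' j).natAbs := by
        have h8 : 0 ≤ v' j + ((v' j).natAbs : ℤ) := by omega
        linarith
      rw [Int.toNat_of_nonneg h7]
    have hclass0 : A.mulVec (fun i => (v0 i : ℤ)) - w ∈ N := by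
      have hδ : (fun i => (v0 i : ℤ)) - v'
          = liftInt σ eσ (fun k => -(v' (eσ k)))
            + E • (fun j => if j ∈ σ then 0 else ((v' j).natAbs : ℤ)) := by
        funext j
        by_cases h : j ∈ σ
        · simp only [Pi.sub_apply, Pi.add_apply, Pi.smul_apply, liftInt_def, dif_pos h,
            Equiv.apply_symm_apply, if_pos h, smul_eq_mul, mul_zero, add_zero]
          rw [hv0σ j h]
          simp
        · simp only [Pi.sub_apply, Pi.add_apply, Pi.smul_apply, liftInt_def, dif_neg h,
            if_neg h, smul_eq_mul, zero_add]
          rw [hv0cast j h]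
          ring
      have hmem2 : A.mulVec ((fun i => (v0 i : ℤ)) - v') ∈ N := by
        rw [hδ, Matrix.mulVec_add, mulVec_liftInt, Matrix.mulVec_smul]
        refine N.add_mem (hmemN _) ?_
        have h9 := hdetmem (B.det • (A.mulVec (fun j => if j ∈ σ then 0 else ((v' j).natAbs : ℤ))))
        rwa [smul_smul, ← hE] at h9
      rwa [Matrix.mulVec_sub, hv'] at hmem2
    set P : ℕ → Prop := fun k => ∃ vv : Fin n → ℕ, (∀ i ∈ σ, vv i = 0) ∧
        (A.mulVec (fun i => (vv i : ℤ)) - w ∈ N) ∧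
        q ⬝ᵥ (fun i => (vv i : ℤ)) = (k : ℤ) with hPdef
    have hPex : ∃ k, P k :=
      ⟨(q ⬝ᵥ (fun i => (v0 i : ℤ))).toNat, v0, hv0σ, hclass0,
        by rw [Int.toNat_of_nonneg (hqnn v0)]⟩
    obtain ⟨u, hu1, hu2, hu3⟩ := Nat.find_spec hPex
    have humin : ∀ vv : Fin n → ℕ, (∀ i ∈ σ, vv i = 0) →
        (A.mulVec (fun i => (vv i : ℤ)) - w ∈ N) →
        q ⬝ᵥ (fun i => (u i : ℤ)) ≤ q ⬝ᵥ (fun i => (vv i : ℤ)) := by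
      intro vv h1 h2
      have hPvv : P ((q ⬝ᵥ (fun i => (vv i : ℤ))).toNat) :=
        ⟨vv, h1, h2, by rw [Int.toNat_of_nonneg (hqnn vv)]⟩
      have hk := Nat.find_le (h := hPex) hPvv
      have h3 := hqnn vv
      rw [hu3]
      omega
    have hadm : AdmissiblePair A c u σ := by
      refine ⟨hσ, hu1, ?_⟩
      rintro x ⟨ww, hww, rfl⟩
      apply hopt
      intro z hz
      have hx1 : q ⬝ᵥ (fun i => (((u + ww) i : ℕ) : ℤ)) = q ⬝ᵥ (fun i => (u i : ℤ)) := by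
        rw [hcastadd, dotProduct_add]
        have : q ⬝ᵥ (fun i => (ww i : ℤ)) = 0 :=
          hqσ _ (fun j hj => by rw [hww j hj]; rfl)
        rw [this, add_zero]
      set zoff : Fin n → ℕ := fun j => if j ∈ σ then 0 else z j with hzoffdef
      have hzoffσ : ∀ i ∈ σ, zoff i = 0 := fun i hi => by simp [hzoffdef, hi]
      have hq_z : q ⬝ᵥ (fun i => (z i : ℤ)) = q ⬝ᵥ (fun i => (zoff i : ℤ)) := by
        refine Finset.sum_congr rfl fun j _ => ?_
        by_cases h : j ∈ σ
        · rw [hq0 j h, zero_mul, zero_mul]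
        · simp [hzoffdef, h]
      have hzoffclass : A.mulVec (fun i => (zoff i : ℤ)) - w ∈ N := by
        have m1 : A.mulVec (fun i => (zoff i : ℤ)) - A.mulVec (fun i => (z i : ℤ)) ∈ N :=
          hdiffmem _ _ (fun j hj => by simp [hzoffdef, hj])
        have m2 : A.mulVec (fun i => (((u + ww) i : ℕ) : ℤ))
            - A.mulVec (fun i => (u i : ℤ)) ∈ N := by
          refine hdiffmem _ _ (fun j hj => ?_)
          simp [hww j hj]
        have hassemble : A.mulVec (fun i => (zoff i : ℤ)) - w =
            (A.mulVec (fun i => (zoff i : ℤ)) - A.mulVec (fun i => (z i : ℤ)))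
            + ((A.mulVec (fun i => (((u + ww) i : ℕ) : ℤ)) - A.mulVec (fun i => (u i : ℤ)))
              + (A.mulVec (fun i => (u i : ℤ)) - w)) := by
          rw [hz]
          abel
        rw [hassemble]
        exact N.add_mem m1 (N.add_mem m2 hu2)
      have hmin := humin zoff hzoffσ hzoffclass
      rw [hx1, hq_z]
      exact hmin
    refine ⟨⟨u, hstd u hadm⟩, ?_⟩
    show Submodule.Quotient.mk _ = Submodule.Quotient.mk w
    rw [Submodule.Quotient.eq]
    exact hu2
  have hcardeq := Nat.card_congr (Equiv.ofBijective φ ⟨hinj, hsurj⟩)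
  rw [hcardeq]
  exact card_quot_det B hdet
end

section
/- Let Ax ≤ b be a system of m linear inequalities in n variables with rational data and c ∈ ℝⁿ such that max{c·x : Ax ≤ b, x ∈ ℤⁿ} is finite. Then there is a subsystem A′x ≤ b′ consisting of at most 2ⁿ − 1 of the inequalities with max{c·x : Ax ≤ b, x ∈ ℤⁿ} = max{c·x : A′x ≤ b′, x ∈ ℤⁿ}. -/
open Finset

theorem bs_core {m n : ℕ} (A : Fin m → Fin n → ℤ) (b : Fin m → ℤ) (c : Fin n → ℝ) (v : ℝ)
    (xs : Fin n → ℤ) (hxs : ∀ i, ∑ j, A i j * xs j ≤ b i)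
    (hvs : v ≤ ∑ j, c j * (xs j : ℝ))
    (S : Finset (Fin m))
    (hP : ¬ ∃ x : Fin n → ℤ, (∀ i ∈ S, ∑ j, A i j * x j ≤ b i) ∧ v < ∑ j, c j * (x j : ℝ)) :
    ∃ T : Finset (Fin m), T.card ≤ 2 ^ n - 1 ∧
      ¬ ∃ x : Fin n → ℤ, (∀ i ∈ T, ∑ j, A i j * x j ≤ b i) ∧ v < ∑ j, c j * (x j : ℝ) := by
  classical
  revert hP
  induction S using Finset.strongInduction with
  | _ S ih =>
  intro hP
  by_cases hcard : S.card ≤ 2 ^ n - 1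
  · exact ⟨S, hcard, hP⟩
  by_cases hmin : ∃ i ∈ S, ¬ ∃ x : Fin n → ℤ,
      (∀ j ∈ S.erase i, ∑ k, A j k * x k ≤ b j) ∧ v < ∑ k, c k * (x k : ℝ)
  · obtain ⟨i, hi, hPe⟩ := hmin
    exact ih _ (Finset.erase_ssubset hi) hPe
  push_neg at hmin
  have h2n : 2 ^ n ≤ S.card := by
    have := Nat.one_le_two_pow (n := n)
    omega
  exfalso
  choose w hw hwc using hmin
  -- witnesses w i hi : feasible for S.erase i, with value > v
  -- b' i ≤ a_i · (w i) - 1 for any infeasible b' ≥ b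
  set P : ℤ → Prop := fun t => ∃ b' : Fin m → ℤ, (∀ i, b i ≤ b' i) ∧
      (¬ ∃ x : Fin n → ℤ, (∀ i ∈ S, ∑ j, A i j * x j ≤ b' i) ∧ v < ∑ j, c j * (x j : ℝ)) ∧
      t = ∑ i ∈ S, b' i with hPdef
  have hbound : ∀ t, P t → t ≤ ∑ i ∈ S.attach, (∑ j, A i.1 j * w i.1 i.2 j) := by
    rintro t ⟨b', hge, hinf, rfl⟩
    rw [← Finset.sum_attach S b']
    refine Finset.sum_le_sum fun i _ => ?_
    by_contra hlt
    push_neg at hlt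
    exact hinf ⟨w i.1 i.2, fun k hk => by
      rcases eq_or_ne k i.1 with rfl | hne
      · exact le_of_lt hlt
      · exact le_trans (hw i.1 i.2 k (Finset.mem_erase.2 ⟨hne, hk⟩)) (hge k),
      hwc i.1 i.2⟩
  have hinh : P (∑ i ∈ S, b i) := ⟨b, fun _ => le_rfl, hP, rfl⟩
  obtain ⟨t₀, ⟨b', hge, hinf, hsum⟩, hmax'⟩ :=
    Int.exists_greatest_of_bdd ⟨_, fun t ht => hbound t ht⟩ ⟨_, hinh⟩
  -- maximality: adding 1 to any coordinate in S makes it feasible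
  have hstep : ∀ i ∈ S, ∃ x : Fin n → ℤ,
      (∀ k ∈ S, ∑ j, A k j * x j ≤ b' k + if k = i then 1 else 0) ∧
        v < ∑ j, c j * (x j : ℝ) := by
    intro i hi
    by_contra hc
    have hPt : P (t₀ + 1) := by
      refine ⟨fun k => b' k + if k = i then 1 else 0, fun k => ?_, hc, ?_⟩
      · have := hge k; dsimp only; split <;> omega
      · rw [Finset.sum_add_distrib, Finset.sum_ite_eq' S i (fun _ => (1 : ℤ)), if_pos hi,
          hsum]
    have := hmax' _ hPt
    omega
  choose X hX hXc using hstep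
  -- pigeonhole mod 2 among the points X i (i ∈ S) and xs
  set pt : Option {i // i ∈ S} → (Fin n → ℤ) := fun o =>
    Option.elim o xs (fun i => X i.1 i.2) with hptdef
  set δ : Option {i // i ∈ S} → Fin m → ℤ := fun o k =>
    Option.elim o 0 (fun i => if k = i.1 then 1 else 0) with hδdef
  have hfeas : ∀ o, ∀ k ∈ S, ∑ j, A k j * pt o j ≤ b' k + δ o k := by
    rintro (_ | i) k hk
    · simpa [hptdef, hδdef] using le_trans (hxs k) (hge k)
    · simpa [hptdef, hδdef] using hX i.1 i.2 k hk
  have hval : ∀ o, v ≤ ∑ j, c j * (pt o j : ℝ) := by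
    rintro (_ | i)
    · simpa [hptdef] using hvs
    · exact le_of_lt (by simpa [hptdef] using hXc i.1 i.2)
  have hcard2 : Fintype.card (Fin n → ZMod 2) < Fintype.card (Option {i // i ∈ S}) := by
    rw [Fintype.card_option, Fintype.card_coe, Fintype.card_fun]
    simp only [ZMod.card, Fintype.card_fin]
    omega
  obtain ⟨o₁, o₂, hne, heq⟩ :=
    Fintype.exists_ne_map_eq_of_card_lt (fun o (j : Fin n) => ((pt o j : ℤ) : ZMod 2)) hcard2
  -- midpoint
  have h2 : ∀ j, ∃ t, pt o₁ j + pt o₂ j = 2 * t := by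
    intro j
    have hj := congrFun heq j
    have hdvd : (2 : ℤ) ∣ (pt o₁ j - pt o₂ j) := by
      have : ((pt o₁ j - pt o₂ j : ℤ) : ZMod 2) = 0 := by
        push_cast
        rw [hj]; ring
      exact (ZMod.intCast_zmod_eq_zero_iff_dvd _ 2).mp this
    obtain ⟨t, ht⟩ := hdvd
    exact ⟨t + pt o₂ j, by linarith⟩
  choose y hy using h2
  have hδ2 : ∀ k, δ o₁ k + δ o₂ k ≤ 1 := by
    intro k
    rcases o₁ with _ | i₁ <;> rcases o₂ with _ | i₂ <;> simp only [hδdef, Option.elim]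
    · omega
    · split <;> omega
    · split <;> omega
    · have hne' : i₁.1 ≠ i₂.1 := fun h => hne (by simp [Option.some.injEq, Subtype.ext h])
      split_ifs with h1 h2 <;> omega
  refine hinf ⟨y, fun k hk => ?_, ?_⟩
  · have e : 2 * (∑ j, A k j * y j) = (∑ j, A k j * pt o₁ j) + (∑ j, A k j * pt o₂ j) := by
      rw [Finset.mul_sum, ← Finset.sum_add_distrib]
      refine Finset.sum_congr rfl fun j _ => ?_
      linear_combination (-(A k j)) * hy j
    have h1 := hfeas o₁ k hk
    have h2 := hfeas o₂ k hk
    have h3 := hδ2 k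
    omega
  · have e : 2 * (∑ j, c j * (y j : ℝ)) =
        (∑ j, c j * (pt o₁ j : ℝ)) + (∑ j, c j * (pt o₂ j : ℝ)) := by
      rw [Finset.mul_sum, ← Finset.sum_add_distrib]
      refine Finset.sum_congr rfl fun j _ => ?_
      have : ((pt o₁ j : ℝ)) + ((pt o₂ j : ℝ)) = 2 * (y j : ℝ) := by
        exact_mod_cast congrArg (fun z : ℤ => (z : ℝ)) (hy j)
      linear_combination (-(c j)) * this
    have hstrict : v + v < (∑ j, c j * (pt o₁ j : ℝ)) + (∑ j, c j * (pt o₂ j : ℝ)) := by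
      rcases o₁ with _ | i₁ <;> rcases o₂ with _ | i₂
      · exact absurd rfl hne
      · have := hXc i₂.1 i₂.2
        have h1 := hval (none)
        refine add_lt_add_of_le_of_lt h1 (by simpa [hptdef] using this)
      · have := hXc i₁.1 i₁.2
        have h2 := hval (none)
        refine add_lt_add_of_lt_of_le (by simpa [hptdef] using this) h2
      · exact add_lt_add_of_lt_of_le (by simpa [hptdef] using hXc i₁.1 i₁.2)
          (hval (some i₂))
    linarith

/-- Bell–Scarf theorem: if the integer program `max {c·x : Ax ≤ b, x ∈ ℤⁿ}` over a
rational system has a finite (attained) maximum, then the same maximum is attained using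
a subsystem of at most `2ⁿ − 1` of the inequalities. -/
theorem stmt_15 (m n : ℕ) (A : Matrix (Fin m) (Fin n) ℚ) (b : Fin m → ℚ)
    (c : Fin n → ℝ) (v : ℝ)
    (hmax : IsGreatest {t : ℝ | ∃ x : Fin n → ℤ,
      (∀ i, ∑ j, (A i j : ℝ) * (x j : ℝ) ≤ (b i : ℝ)) ∧ t = ∑ j, c j * (x j : ℝ)} v) :
    ∃ T : Finset (Fin m), T.card ≤ 2 ^ n - 1 ∧
      IsGreatest {t : ℝ | ∃ x : Fin n → ℤ,
        (∀ i ∈ T, ∑ j, (A i j : ℝ) * (x j : ℝ) ≤ (b i : ℝ)) ∧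
        t = ∑ j, c j * (x j : ℝ)} v := by
  classical
  obtain ⟨⟨x₀, hx₀, hval₀⟩, hub⟩ := hmax
  set d : ℤ := ∏ i : Fin m, ∏ j : Fin n, ((A i j).den : ℤ) with hd
  have hdpos : 0 < d :=
    Finset.prod_pos fun i _ => Finset.prod_pos fun j _ => by
      exact_mod_cast (A i j).pos
  have hdvd : ∀ i j, ((A i j).den : ℤ) ∣ d := by
    intro i j
    rw [hd]
    exact dvd_trans
      (Finset.dvd_prod_of_mem (fun j' => ((A i j').den : ℤ)) (Finset.mem_univ j))
      (Finset.dvd_prod_of_mem (fun i' => ∏ j', ((A i' j').den : ℤ)) (Finset.mem_univ i))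
  set AZ : Fin m → Fin n → ℤ := fun i j => (A i j).num * (d / (A i j).den) with hAZdef
  have hAZ : ∀ i j, ((AZ i j : ℤ) : ℚ) = A i j * (d : ℚ) := by
    intro i j
    obtain ⟨e, he⟩ := hdvd i j
    have hden : ((A i j).den : ℤ) ≠ 0 := by exact_mod_cast (A i j).den_nz
    rw [hAZdef]
    simp only
    rw [he, Int.mul_ediv_cancel_left _ hden]
    push_cast
    have key : (A i j) * ((A i j).den : ℚ) = ((A i j).num : ℚ) := Rat.mul_den_eq_num _
    linear_combination (-(e : ℚ)) * key
  set bZ : Fin m → ℤ := fun i => ⌊(b i : ℚ) * (d : ℚ)⌋ with hbZdef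
  have hbr : ∀ (x : Fin n → ℤ) (i : Fin m),
      (∑ j, (A i j : ℝ) * (x j : ℝ) ≤ (b i : ℝ)) ↔ (∑ j, AZ i j * x j ≤ bZ i) := by
    intro x i
    have s1 : (∑ j, (A i j : ℝ) * (x j : ℝ) ≤ (b i : ℝ)) ↔
        ((∑ j, A i j * (x j : ℚ)) ≤ b i) := by
      rw [show (∑ j, (A i j : ℝ) * (x j : ℝ)) = (((∑ j, A i j * (x j : ℚ)) : ℚ) : ℝ) by
        push_cast; ring]
      exact Rat.cast_le
    have s2 : ((∑ j, A i j * (x j : ℚ)) ≤ b i) ↔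
        (((∑ j, AZ i j * x j : ℤ) : ℚ) ≤ (b i : ℚ) * (d : ℚ)) := by
      rw [show (((∑ j, AZ i j * x j : ℤ) : ℚ)) = (∑ j, A i j * (x j : ℚ)) * (d : ℚ) by
        push_cast
        rw [Finset.sum_mul]
        refine Finset.sum_congr rfl fun j _ => ?_
        rw [show ((AZ i j : ℤ) : ℚ) = A i j * (d : ℚ) from hAZ i j]
        ring]
      constructor
      · intro h
        exact mul_le_mul_of_nonneg_right h (by positivity)
      · intro h
        have hd' : (0 : ℚ) < (d : ℚ) := by exact_mod_cast hdpos
        exact le_of_mul_le_mul_right h hd'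
    rw [s1, s2, hbZdef]
    exact (Int.le_floor).symm
  have hvs : v ≤ ∑ j, c j * (x₀ j : ℝ) := le_of_eq hval₀
  have hP : ¬ ∃ x : Fin n → ℤ,
      (∀ i ∈ (Finset.univ : Finset (Fin m)), ∑ j, AZ i j * x j ≤ bZ i) ∧
      v < ∑ j, c j * (x j : ℝ) := by
    rintro ⟨x, hx, hcx⟩
    have hmem : (∑ j, c j * (x j : ℝ)) ∈ {t : ℝ | ∃ x : Fin n → ℤ,
        (∀ i, ∑ j, (A i j : ℝ) * (x j : ℝ) ≤ (b i : ℝ)) ∧ t = ∑ j, c j * (x j : ℝ)} :=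
      ⟨x, fun i => (hbr x i).mpr (hx i (Finset.mem_univ i)), rfl⟩
    exact absurd (hub hmem) (not_le.mpr hcx)
  obtain ⟨T, hTcard, hTinf⟩ := bs_core AZ bZ c v x₀
    (fun i => (hbr x₀ i).mp (hx₀ i)) hvs Finset.univ hP
  refine ⟨T, hTcard, ⟨⟨x₀, fun i _ => hx₀ i, hval₀⟩, ?_⟩⟩
  rintro t ⟨x, hx, rfl⟩
  by_contra h
  push_neg at h
  exact hTinf ⟨x, fun i hi => (hbr x i).mp (hx i hi), h⟩
end
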